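/- arXiv:2205.14679 — 9 statements merged into one kernel-verified Lean document; each statement's English description precedes it below -/
import Mathlib

section
/- Let G be a connected simple graph. Then every graph equimorphic with G is connected if and only if G ⊕ 1 (the disjoint union of G with one isolated vertex) is not equimorphic with G. In particular, for a tree T, every graph equimorphic with T is a tree if and only if T ⊕ 1 is not equimorphic with T. -/
open SimpleGraph

/-- Two simple graphs are *equimorphic* (siblings) if each embeds into the other. -/
def Equimorphic {α β : Type*} (G : SimpleGraph α) (H : SimpleGraph β) : Prop :=
  Nonempty (G ↪g H) ∧ Nonempty (H ↪g G)

/-- `G ⊕ 1`: the disjoint union of `G` with one isolated vertex. -/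
def addIsolated {α : Type*} (G : SimpleGraph α) : SimpleGraph (α ⊕ Unit) :=
  G ⊕g (⊥ : SimpleGraph Unit)

lemma addIsolated_not_connected {α : Type} (G : SimpleGraph α) (hG : G.Connected) :
    ¬ (addIsolated G).Connected := by
  obtain ⟨x⟩ := hG.nonempty
  intro h
  obtain ⟨w⟩ := h.preconnected (Sum.inr ()) (Sum.inl x)
  cases w with
  | cons h _ =>
    cases ‹α ⊕ Unit› with
    | inl a => simp [addIsolated] at h
    | inr b => exact (⊥ : SimpleGraph Unit).loopless.irrefl () (by cases b; exact h)

/-- For a connected simple graph `G`: every graph equimorphic with `G` is connected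
if and only if `G ⊕ 1` is not equimorphic with `G`.  In particular, for a tree `T`
(a connected acyclic graph), every graph equimorphic with `T` is a tree if and only
if `T ⊕ 1` is not equimorphic with `T`. -/
theorem siblings_connected_iff_not_addIsolated_sibling
    {α : Type} (G : SimpleGraph α) (hG : G.Connected) :
    ((∀ (β : Type) (H : SimpleGraph β), Equimorphic G H → H.Connected) ↔
      ¬ Equimorphic G (addIsolated G)) ∧
    (G.IsAcyclic →
      ((∀ (β : Type) (H : SimpleGraph β), Equimorphic G H → H.IsTree) ↔
        ¬ Equimorphic G (addIsolated G))) := by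
  have key : (∀ (β : Type) (H : SimpleGraph β), Equimorphic G H → H.Connected) ↔
      ¬ Equimorphic G (addIsolated G) := by
    constructor
    · intro hall heq
      exact addIsolated_not_connected G hG (hall _ _ heq)
    · intro hne β H ⟨⟨f⟩, ⟨g⟩⟩
      by_contra hH
      apply hne
      refine ⟨⟨Embedding.sumInl⟩, ?_⟩
      -- find a vertex of H not reachable from the image of f
      obtain ⟨x⟩ := hG.nonempty
      have hHne : Nonempty β := ⟨f x⟩
      rw [connected_iff] at hH
      simp only [hHne, and_true] at hH
      rw [Preconnected] at hH
      push_neg at hH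
      obtain ⟨u, v, huv⟩ := hH
      -- one of u, v is not reachable from f x
      have : ∃ v, ¬ H.Reachable (f x) v := by
        by_contra hc
        push_neg at hc
        exact huv ((hc u).symm.trans (hc v))
      obtain ⟨v, hv⟩ := this
      have hvr : ∀ a : α, ¬ H.Reachable (f a) v := by
        intro a hr
        exact hv (((hG.preconnected x a).map f.toHom).trans hr)
      -- build embedding addIsolated G ↪g H
      have emb : addIsolated G ↪g H := by
        refine ⟨⟨Sum.elim f (fun _ => v), ?_⟩, ?_⟩
        · intro a b hab
          cases a with
          | inl a => cases b with
            | inl b => simpa using f.injective (by simpa using hab)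
            | inr b => simp only [Sum.elim_inl, Sum.elim_inr] at hab; exact absurd (hab ▸ Reachable.refl _) (hvr a)
          | inr a => cases b with
            | inl b => simp only [Sum.elim_inl, Sum.elim_inr] at hab; exact absurd (hab ▸ Reachable.refl _) (hvr b)
            | inr b => cases a; cases b; rfl
        · intro a b
          cases a with
          | inl a => cases b with
            | inl b => exact f.map_rel_iff
            | inr b =>
              constructor
              · intro h; exact absurd h.reachable (hvr a)
              · intro h; exact absurd h (by simp [addIsolated])
          | inr a => cases b with
            | inl b =>
              constructor
              · intro h; exact absurd h.symm.reachable (hvr b)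
              · intro h; exact absurd h (by simp [addIsolated])
            | inr b => simp [addIsolated]
      exact ⟨emb.trans g⟩
  refine ⟨key, fun hac => ?_⟩
  constructor
  · intro hall
    exact key.mp (fun β H h => (hall β H h).isConnected)
  · intro hne β H heq
    refine ⟨key.mpr hne β H heq, ?_⟩
    obtain ⟨_, ⟨g⟩⟩ := heq
    intro v c hc
    exact hac (c.map g.toHom) (hc.map g.injective)
end

section
/- In the labelled tree R, for every vertex v the label lab(v) equals the graph distance from v to the nearest vertex of degree 2. -/
open SimpleGraph

/-- In the labelled tree `R` (a tree with a labelling `lab` and a distinguished vertex `r`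
of label `0`, in which every vertex of label `0` has exactly two neighbours, both of
label `1`, and every vertex of label `n+1` has exactly three neighbours, of labels
`n`, `n+1` and `n+2`), the label of every vertex `v` equals the graph distance from `v`
to the nearest vertex of degree `2`. -/
theorem label_eq_dist_to_nearest_degree_two_vertex
    {V : Type} (R : SimpleGraph V) (lab : V → ℕ) (r : V)
    (htree : R.IsTree)
    (hr : lab r = 0)
    (h0 : ∀ v, lab v = 0 → ∃ a b, a ≠ b ∧ R.neighborSet v = {a, b} ∧
      lab a = 1 ∧ lab b = 1)
    (h1 : ∀ v n, lab v = n + 1 → ∃ a b c, a ≠ b ∧ a ≠ c ∧ b ≠ c ∧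
      R.neighborSet v = {a, b, c} ∧ lab a = n ∧ lab b = n + 1 ∧ lab c = n + 2) :
    ∀ v, IsLeast {d : ℕ | ∃ w, (R.neighborSet w).ncard = 2 ∧ R.dist v w = d} (lab v) := by
  have hconn := htree.isConnected
  -- labels of adjacent vertices differ by at most 1
  have adj_le : ∀ u w : V, R.Adj u w → lab w ≤ lab u + 1 := by
    intro u w huw
    have hw : w ∈ R.neighborSet u := huw
    cases h : lab u with
    | zero =>
      obtain ⟨a, b, hab, hns, ha, hb⟩ := h0 u h
      rw [hns] at hw
      rcases hw with rfl | rfl <;> omega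
    | succ n =>
      obtain ⟨a, b, c, _, _, _, hns, ha, hb, hc⟩ := h1 u n h
      rw [hns] at hw
      rcases hw with rfl | rfl | rfl <;> omega
  have walk_le : ∀ (u w : V) (p : R.Walk u w), lab u ≤ lab w + p.length := by
    intro u w p
    induction p with
    | nil => simp
    | cons h q ih =>
      have := adj_le _ _ h.symm
      simp only [SimpleGraph.Walk.length_cons]
      omega
  -- degree-2 vertices have label 0
  have deg2 : ∀ w : V, (R.neighborSet w).ncard = 2 → lab w = 0 := by
    intro w hw
    by_contra h
    obtain ⟨n, hn⟩ : ∃ n, lab w = n + 1 := ⟨lab w - 1, by omega⟩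
    obtain ⟨a, b, c, hab, hac, hbc, hns, _, _, _⟩ := h1 w n hn
    rw [hns] at hw
    rw [Set.ncard_insert_of_notMem (by simp [hab, hac]),
      Set.ncard_pair hbc] at hw
    omega
  -- lower bound
  have lower : ∀ (v w : V), (R.neighborSet w).ncard = 2 → lab v ≤ R.dist v w := by
    intro v w hw
    obtain ⟨p, hp⟩ := hconn.exists_walk_length_eq_dist v w
    have := walk_le v w p
    rw [deg2 w hw] at this
    omega
  -- existence of a nearby label-0 vertex
  have mem : ∀ (n : ℕ) (v : V), lab v = n → ∃ w, lab w = 0 ∧ R.dist v w ≤ n := by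
    intro n
    induction n with
    | zero => intro v hv; exact ⟨v, hv, by simp⟩
    | succ n ih =>
      intro v hv
      obtain ⟨a, b, c, _, _, _, hns, ha, _, _⟩ := h1 v n hv
      have hadj : R.Adj v a := by
        have : a ∈ R.neighborSet v := by rw [hns]; exact Or.inl rfl
        exact this
      obtain ⟨w, hw0, hwd⟩ := ih a ha
      refine ⟨w, hw0, ?_⟩
      have htri := hconn.dist_triangle (u := v) (v := a) (w := w)
      have h1' : R.dist v a ≤ 1 := by
        have : R.dist v a ≤ (SimpleGraph.Walk.cons hadj SimpleGraph.Walk.nil).length :=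
          SimpleGraph.dist_le _
        simpa using this
      omega
  intro v
  constructor
  · obtain ⟨w, hw0, hwd⟩ := mem (lab v) v rfl
    obtain ⟨a, b, hab, hns, _, _⟩ := h0 w hw0
    have hcard : (R.neighborSet w).ncard = 2 := by
      rw [hns, Set.ncard_pair hab]
    refine ⟨w, hcard, ?_⟩
    have := lower v w hcard
    omega
  · rintro d ⟨w, hw2, rfl⟩
    exact lower v w hw2
end

section
/- For any two tree vertices u, v of R, the set of tree vertices w with col_u(w) ≠ col_v(w) is finite; moreover, every such exceptional w is the terminal vertex of a path in R whose initial vertex lies on P_{u,v} and along which the labels strictly decrease (down to 0 at w). -/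
open SimpleGraph

section Aux

variable {V : Type} {R : SimpleGraph V} {lab : V → ℕ}

lemma aux_chain'_getD (r : V) (P : V → V → Prop) (l : List V) :
    l.Chain' P ↔ ∀ i, i + 1 < l.length → P (l.getD i r) (l.getD (i+1) r) := by
  rw [List.Chain', List.isChain_iff_getElem]
  constructor
  · intro h i hi
    rw [List.getD_eq_getElem _ _ (by omega), List.getD_eq_getElem _ _ hi]
    simpa using h i (by omega)
  · intro h i hi
    have := h i (by omega)
    rw [List.getD_eq_getElem _ _ (by omega), List.getD_eq_getElem _ _ (by omega)] at this
    simpa using this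

lemma aux_adj_lab
    (h0 : ∀ v, lab v = 0 → ∃ a b, a ≠ b ∧ R.neighborSet v = {a, b} ∧ lab a = 1 ∧ lab b = 1)
    (h1 : ∀ v n, lab v = n + 1 → ∃ a b c, a ≠ b ∧ a ≠ c ∧ b ≠ c ∧
      R.neighborSet v = {a, b, c} ∧ lab a = n ∧ lab b = n + 1 ∧ lab c = n + 2)
    {a b : V} (hab : R.Adj a b) :
    lab b + 1 = lab a ∨ lab b = lab a ∨ lab b = lab a + 1 := by
  have hb : b ∈ R.neighborSet a := hab
  cases hn : lab a with
  | zero =>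
    obtain ⟨x, y, -, hset, hx, hy⟩ := h0 a hn
    rw [hset] at hb
    simp only [Set.mem_insert_iff, Set.mem_singleton_iff] at hb
    rcases hb with rfl | rfl <;> omega
  | succ n =>
    obtain ⟨x, y, z, -, -, -, hset, hx, hy, hz⟩ := h1 a n hn
    rw [hset] at hb
    simp only [Set.mem_insert_iff, Set.mem_singleton_iff] at hb
    rcases hb with rfl | rfl | rfl <;> omega

lemma aux_down_unique
    (h1 : ∀ v n, lab v = n + 1 → ∃ a b c, a ≠ b ∧ a ≠ c ∧ b ≠ c ∧
      R.neighborSet v = {a, b, c} ∧ lab a = n ∧ lab b = n + 1 ∧ lab c = n + 2)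
    {a b c : V} {n : ℕ} (ha : lab a = n + 1) (hb : R.Adj a b) (hc : R.Adj a c)
    (hlb : lab b = n) (hlc : lab c = n) : b = c := by
  obtain ⟨x, y, z, -, -, -, hset, hx, hy, hz⟩ := h1 a n ha
  have hb' : b ∈ R.neighborSet a := hb
  have hc' : c ∈ R.neighborSet a := hc
  rw [hset] at hb' hc'
  simp only [Set.mem_insert_iff, Set.mem_singleton_iff] at hb' hc'
  rcases hb' with rfl | rfl | rfl <;> rcases hc' with rfl | rfl | rfl <;> first | rfl | omega


lemma aux_desc
    (h0 : ∀ v, lab v = 0 → ∃ a b, a ≠ b ∧ R.neighborSet v = {a, b} ∧ lab a = 1 ∧ lab b = 1)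
    (h1 : ∀ v n, lab v = n + 1 → ∃ a b c, a ≠ b ∧ a ≠ c ∧ b ≠ c ∧
      R.neighborSet v = {a, b, c} ∧ lab a = n ∧ lab b = n + 1 ∧ lab c = n + 2) :
    ∀ {x w : V} (q : R.Walk x w), q.IsPath → lab w = 0 →
      q.support.Chain' (fun a b => lab a ≠ lab b) →
      q.support.Chain' (fun a b => lab b < lab a) := by
  intro x w q
  induction q with
  | nil => intro _ _ _; simp [List.Chain']
  | @cons x y w h q ih =>
    intro hp hw hne
    have hp' : q.IsPath := hp.of_cons
    have hne' : q.support.Chain' (fun a b => lab a ≠ lab b) := by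
      simpa [List.Chain'] using hne.tail
    have hlt : q.support.Chain' (fun a b => lab b < lab a) := ih hp' hw hne'
    have hxy : lab x ≠ lab y := by
      rw [Walk.support_cons, q.support_eq_cons, List.Chain', List.isChain_cons_cons] at hne
      exact hne.1
    have key : lab y < lab x := by
      rcases aux_adj_lab h0 h1 h with h3 | h3 | h3
      · omega
      · omega
      · -- lab y = lab x + 1 : impossible
        exfalso
        cases q with
        | nil => omega
        | @cons y z w h2 q2 =>
          have hzy : lab z < lab y := by
            rw [Walk.support_cons, q2.support_eq_cons, List.Chain', List.isChain_cons_cons] at hlt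
            exact hlt.1
          have hz1 : lab z + 1 = lab y := by
            rcases aux_adj_lab h0 h1 h2 with h4 | h4 | h4 <;> omega
          have hxz : x = z := by
            refine aux_down_unique h1 (a := y) (n := lab z) (by omega) h.symm h2 (by omega) rfl
          rw [Walk.cons_isPath_iff] at hp
          exact hp.2 (by rw [Walk.support_cons]; exact List.mem_cons_of_mem _ (hxz ▸ q2.start_mem_support))
    rw [Walk.support_cons, q.support_eq_cons, List.Chain', List.isChain_cons_cons]
    rw [q.support_eq_cons] at hlt
    exact ⟨key, hlt⟩

lemma aux_desc_unique
    (h0 : ∀ v, lab v = 0 → ∃ a b, a ≠ b ∧ R.neighborSet v = {a, b} ∧ lab a = 1 ∧ lab b = 1)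
    (h1 : ∀ v n, lab v = n + 1 → ∃ a b c, a ≠ b ∧ a ≠ c ∧ b ≠ c ∧
      R.neighborSet v = {a, b, c} ∧ lab a = n ∧ lab b = n + 1 ∧ lab c = n + 2) :
    ∀ (n : ℕ) {x w w' : V} (q : R.Walk x w) (q' : R.Walk x w'),
      lab x = n → lab w = 0 → lab w' = 0 →
      q.support.Chain' (fun a b => lab b < lab a) →
      q'.support.Chain' (fun a b => lab b < lab a) → w = w' := by
  intro n
  induction n with
  | zero =>
    intro x w w' q q' hx hw hw' hq hq'
    cases q with
    | nil =>
      cases q' with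
      | nil => rfl
      | @cons x y w' h2 q2 =>
        exfalso
        rw [Walk.support_cons, q2.support_eq_cons, List.Chain', List.isChain_cons_cons] at hq'
        omega
    | @cons x y w h2 q2 =>
      exfalso
      rw [Walk.support_cons, q2.support_eq_cons, List.Chain', List.isChain_cons_cons] at hq
      omega
  | succ m ih =>
    intro x w w' q q' hx hw hw' hq hq'
    cases q with
    | nil => omega
    | @cons x y w h2 q2 =>
      cases q' with
      | nil => omega
      | @cons x y' w' h2' q2' =>
        have hyx : lab y < lab x := by
          rw [Walk.support_cons, q2.support_eq_cons, List.Chain', List.isChain_cons_cons] at hq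
          exact hq.1
        have hy'x : lab y' < lab x := by
          rw [Walk.support_cons, q2'.support_eq_cons, List.Chain', List.isChain_cons_cons] at hq'
          exact hq'.1
        have hy : lab y = m := by
          rcases aux_adj_lab h0 h1 h2 with h4 | h4 | h4 <;> omega
        have hy' : lab y' = m := by
          rcases aux_adj_lab h0 h1 h2' with h4 | h4 | h4 <;> omega
        obtain rfl : y = y' := aux_down_unique h1 (a := x) (n := m) hx h2 h2' hy hy'
        exact ih q2 q2' hy hw hw' (by simpa [List.Chain'] using hq.tail) (by simpa [List.Chain'] using hq'.tail)


lemma aux_first_meet {u v : V} (p : R.Walk u v) :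
    ∀ {w t : V} (q : R.Walk w t), q.IsPath → t ∈ p.support →
      ∃ x, x ∈ p.support ∧ ∃ D : R.Walk w x, D.IsPath ∧
        (∀ y ∈ D.support, y ∈ p.support → y = x) ∧ D.support ⊆ q.support := by
  intro w t q
  induction q with
  | nil =>
    intro _ ht
    exact ⟨_, ht, Walk.nil, Walk.IsPath.nil,
      fun y hy _ => by simpa using hy, by simp⟩
  | @cons w y t h q ih =>
    intro hp ht
    by_cases hw : w ∈ p.support
    · exact ⟨w, hw, Walk.nil, Walk.IsPath.nil, fun y hy _ => by simpa using hy, by simp⟩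
    · obtain ⟨x, hx, D', hD', hmeet, hsub⟩ := ih hp.of_cons ht
      refine ⟨x, hx, Walk.cons h D', ?_, ?_, ?_⟩
      · rw [Walk.cons_isPath_iff]
        refine ⟨hD', fun hmem => ?_⟩
        rw [Walk.cons_isPath_iff] at hp
        exact hp.2 (hsub hmem)
      · intro z hz hzp
        rw [Walk.support_cons, List.mem_cons] at hz
        rcases hz with rfl | hz
        · exact absurd hzp hw
        · exact hmeet z hz hzp
      · rw [Walk.support_cons, Walk.support_cons]
        exact List.cons_subset_cons _ hsub

lemma aux_last_pair (r : V) {c : ℕ} {l pre : List V}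
    (hi : ∃ i, i + 1 < (pre ++ l).length ∧
      lab ((pre ++ l).getD i r) = lab ((pre ++ l).getD (i+1) r) ∧
      c = lab ((pre ++ l).getD i r) ∧
      ∀ j, i < j → j + 1 < (pre ++ l).length →
        lab ((pre ++ l).getD j r) ≠ lab ((pre ++ l).getD (j+1) r))
    {k0 : ℕ} (hk1 : k0 + 1 < l.length)
    (hk2 : lab (l.getD k0 r) = lab (l.getD (k0+1) r))
    (hk3 : ∀ j, k0 < j → j + 1 < l.length →
      lab (l.getD j r) ≠ lab (l.getD (j+1) r)) :
    c = lab (l.getD k0 r) := by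
  obtain ⟨i, hilen, hieq, hic, himax⟩ := hi
  have hlen : (pre ++ l).length = pre.length + l.length := by simp
  have htr : ∀ j : ℕ, (pre ++ l).getD (pre.length + j) r = l.getD j r := by
    intro j
    rw [List.getD_append_right _ _ _ _ (by omega)]
    congr 1
    omega
  have hige : pre.length + k0 ≤ i := by
    by_contra hlt
    push_neg at hlt
    refine himax (pre.length + k0) (by omega) (by omega) ?_
    rw [htr k0, show pre.length + k0 + 1 = pre.length + (k0 + 1) by omega, htr (k0+1)]
    exact hk2
  set j0 := i - pre.length with hj0
  have hij : i = pre.length + j0 := by omega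
  have hj0len : j0 + 1 < l.length := by omega
  have hj0eq : lab (l.getD j0 r) = lab (l.getD (j0+1) r) := by
    rw [← htr j0, ← htr (j0+1), ← hij, show pre.length + (j0+1) = i + 1 by omega]
    exact hieq
  have : j0 = k0 := by
    by_contra hne
    exact hk3 j0 (by omega) hj0len hj0eq
  rw [hic, hij, this, htr k0]


lemma aux_append_path {u x w : V} (A : R.Walk u x) (D' : R.Walk x w)
    (hA : A.IsPath) (hD : D'.IsPath)
    (hmeet : ∀ y ∈ A.support, y ∈ D'.support → y = x) :
    (A.append D').IsPath ∧
      (A.append D').support = A.support.dropLast ++ D'.support := by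
  have hAx : A.support = A.support.dropLast ++ [x] := by
    conv_lhs => rw [← List.dropLast_append_getLast (l := A.support) (by simp)]
    rw [A.getLast_support]
  have hsupp : (A.append D').support = A.support.dropLast ++ D'.support := by
    rw [Walk.support_append]
    conv_lhs => rw [hAx]
    rw [List.append_assoc, List.singleton_append]
    congr 1
    exact (D'.support_eq_cons).symm
  have hxnot : x ∉ A.support.dropLast := by
    have hnd := hA.support_nodup
    rw [hAx, List.nodup_append] at hnd
    intro hmem
    exact hnd.2.2 x hmem x (by simp) rfl
  refine ⟨?_, hsupp⟩
  apply Walk.IsPath.mk'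
  rw [hsupp]
  apply List.Nodup.append
  · exact hA.support_nodup.sublist (List.dropLast_sublist _)
  · exact hD.support_nodup
  · intro y hy hy'
    have hyA : y ∈ A.support := List.dropLast_subset _ hy
    exact hxnot ((hmeet y hyA hy') ▸ hy)


end Aux

open SimpleGraph

/-- For any two tree vertices `u, v` of the labelled tree `R`, the set of tree vertices
`w` with `col u w ≠ col v w` is finite; moreover every such exceptional `w` is the
terminal vertex of a path of `R` whose initial vertex lies on the path `P_{u,v}` and
along which the labels strictly decrease.

Here `col u w` (the colour of `w` with respect to `u`) is the label of the consecutive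
pair (adjacent pair of equal labels) of the path `P_{u,w}` occurring last along that
path; this defining property is taken as a hypothesis, together with `col u u = 0`. -/
theorem colour_functions_agree_almost_everywhere
    {V : Type} (R : SimpleGraph V) (lab : V → ℕ) (r : V)
    (htree : R.IsTree)
    (hr : lab r = 0)
    (h0 : ∀ v, lab v = 0 → ∃ a b, a ≠ b ∧ R.neighborSet v = {a, b} ∧
      lab a = 1 ∧ lab b = 1)
    (h1 : ∀ v n, lab v = n + 1 → ∃ a b c, a ≠ b ∧ a ≠ c ∧ b ≠ c ∧
      R.neighborSet v = {a, b, c} ∧ lab a = n ∧ lab b = n + 1 ∧ lab c = n + 2)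
    (col : V → V → ℕ)
    (hcol_refl : ∀ v, col v v = 0)
    (hcol : ∀ u w, lab u = 0 → lab w = 0 → u ≠ w →
      ∀ p : R.Walk u w, p.IsPath →
        ∃ i, i + 1 < p.support.length ∧
          lab (p.support.getD i r) = lab (p.support.getD (i + 1) r) ∧
          col u w = lab (p.support.getD i r) ∧
          (∀ j, i < j → j + 1 < p.support.length →
            lab (p.support.getD j r) ≠ lab (p.support.getD (j + 1) r))) :
    ∀ u v, lab u = 0 → lab v = 0 →
      {w | lab w = 0 ∧ col u w ≠ col v w}.Finite ∧
      (∀ w, lab w = 0 → col u w ≠ col v w →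
        ∀ p : R.Walk u v, p.IsPath →
          ∃ x, x ∈ p.support ∧ ∃ q : R.Walk x w, q.IsPath ∧
            (∀ i, i + 1 < q.support.length →
              lab (q.support.getD (i + 1) r) < lab (q.support.getD i r))) := by
  classical
  intro u v hu hv
  have key : ∀ w, lab w = 0 → col u w ≠ col v w →
      ∀ p : R.Walk u v, p.IsPath →
        ∃ x, x ∈ p.support ∧ ∃ q : R.Walk x w, q.IsPath ∧
          q.support.Chain' (fun a b => lab b < lab a) := by
    intro w hw hne p hp
    by_cases hwu : w = u
    · subst hwu
      exact ⟨w, p.start_mem_support, Walk.nil, Walk.IsPath.nil, by simp [List.Chain']⟩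
    by_cases hwv : w = v
    · subst hwv
      exact ⟨w, p.end_mem_support, Walk.nil, Walk.IsPath.nil, by simp [List.Chain']⟩
    -- find the meeting point
    have hreach : R.Reachable w u := htree.isConnected.preconnected w u
    let q1 : R.Path w u := hreach.some.toPath
    obtain ⟨x, hx, D, hD, hmeet, -⟩ :=
      aux_first_meet p q1.1 q1.2 p.start_mem_support
    set D' : R.Walk x w := D.reverse with hD'def
    have hD' : D'.IsPath := hD.reverse
    have hmeet' : ∀ y ∈ D'.support, y ∈ p.support → y = x := by
      intro y hy hyp
      rw [hD'def, Walk.support_reverse, List.mem_reverse] at hy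
      exact hmeet y hy hyp
    set A : R.Walk u x := p.takeUntil x hx with hAdef
    set B : R.Walk v x := (p.dropUntil x hx).reverse with hBdef
    have hA : A.IsPath := hp.takeUntil hx
    have hB : B.IsPath := (hp.dropUntil hx).reverse
    have hmeetA : ∀ y ∈ A.support, y ∈ D'.support → y = x := by
      intro y hy hy'
      exact hmeet' y hy' (p.support_takeUntil_subset hx hy)
    have hmeetB : ∀ y ∈ B.support, y ∈ D'.support → y = x := by
      intro y hy hy'
      rw [hBdef, Walk.support_reverse, List.mem_reverse] at hy
      exact hmeet' y hy' (p.support_dropUntil_subset hx hy)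
    obtain ⟨hpA, hsA⟩ := aux_append_path A D' hA hD' hmeetA
    obtain ⟨hpB, hsB⟩ := aux_append_path B D' hB hD' hmeetB
    have hnopair : ∀ k, k + 1 < D'.support.length →
        lab (D'.support.getD k r) ≠ lab (D'.support.getD (k+1) r) := by
      by_contra hcon
      push_neg at hcon
      obtain ⟨k, hk, hkeq⟩ := hcon
      set P : ℕ → Prop := fun k => k + 1 < D'.support.length ∧
        lab (D'.support.getD k r) = lab (D'.support.getD (k+1) r) with hPdef
      set k0 := Nat.findGreatest P D'.support.length with hk0def
      have hP : P k0 := Nat.findGreatest_spec (m := k) (by omega) ⟨hk, hkeq⟩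
      have hmax : ∀ j, k0 < j → j + 1 < D'.support.length →
          lab (D'.support.getD j r) ≠ lab (D'.support.getD (j+1) r) := by
        intro j hj hjlen hjeq
        exact Nat.findGreatest_is_greatest hj (by omega) ⟨hjlen, hjeq⟩
      have hcu := hcol u w hu hw (fun h => hwu h.symm) (A.append D') hpA
      rw [hsA] at hcu
      have e1 : col u w = lab (D'.support.getD k0 r) :=
        aux_last_pair r hcu hP.1 hP.2 hmax
      have hcv := hcol v w hv hw (fun h => hwv h.symm) (B.append D') hpB
      rw [hsB] at hcv
      have e2 : col v w = lab (D'.support.getD k0 r) :=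
        aux_last_pair r hcv hP.1 hP.2 hmax
      exact hne (e1.trans e2.symm)
    have hchain : D'.support.Chain' (fun a b => lab a ≠ lab b) :=
      (aux_chain'_getD r _ _).mpr hnopair
    exact ⟨x, hx, D', hD', aux_desc h0 h1 D' hD' hw hchain⟩
  refine ⟨?_, ?_⟩
  · obtain ⟨p0, hp0, -⟩ := htree.existsUnique_path u v
    have hsub : {w | lab w = 0 ∧ col u w ≠ col v w} ⊆
        ⋃ x ∈ {y | y ∈ p0.support},
          {w | lab w = 0 ∧ ∃ q : R.Walk x w,
            q.support.Chain' (fun a b => lab b < lab a)} := by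
      intro w hw
      obtain ⟨x, hx, q, _, hc⟩ := key w hw.1 hw.2 p0 hp0
      exact Set.mem_biUnion hx ⟨hw.1, q, hc⟩
    refine Set.Finite.subset (Set.Finite.biUnion p0.support.finite_toSet ?_) hsub
    intro x _
    apply Set.Subsingleton.finite
    rintro w ⟨hw, q, hq⟩ w' ⟨hw', q', hq'⟩
    exact aux_desc_unique h0 h1 (lab x) q q' rfl hw hw' hq hq'
  · intro w hw hne p hp
    obtain ⟨x, hx, q, hq, hc⟩ := key w hw hne p hp
    exact ⟨x, hx, q, hq, fun i hi => ((aux_chain'_getD r _ _).mp hc) i hi⟩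
end

section
/- Let φ be a graph self-embedding of the labelled tree R. Then col_r(v) = col_{φ(r)}(v) = col_{φ(r)}(φ(v)) for all but finitely many tree vertices v; moreover, every exceptional v is the terminal vertex of a path in R whose initial vertex lies on P_{r,φ(r)} and along which the labels strictly decrease (down to 0 at v). -/
open SimpleGraph

private lemma step_cons_iff {V : Type} {R : SimpleGraph V} (P : V → V → Prop) (d : V)
    {x b w : V} (h : R.Adj x b) (q : R.Walk b w) :
    (∀ i, i + 1 < (Walk.cons h q).support.length →
      P ((Walk.cons h q).support.getD i d) ((Walk.cons h q).support.getD (i + 1) d)) ↔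
    P x b ∧ (∀ i, i + 1 < q.support.length →
      P (q.support.getD i d) (q.support.getD (i + 1) d)) := by
  rw [Walk.support_cons]
  have hb : q.support.getD 0 d = b := by rw [q.support_eq_cons]; rfl
  constructor
  · intro H
    refine ⟨?_, fun i hi => ?_⟩
    · have h0 := H 0 (by
        simp only [List.length_cons]
        have := List.length_pos_iff.mpr q.support_ne_nil
        omega)
      rwa [List.getD_cons_zero, List.getD_cons_succ, hb] at h0
    · have := H (i + 1) (by simp only [List.length_cons]; omega)
      rwa [List.getD_cons_succ, List.getD_cons_succ] at this
  · rintro ⟨h1, h2⟩ i hi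
    cases i with
    | zero => rw [List.getD_cons_zero, List.getD_cons_succ, hb]; exact h1
    | succ i =>
      simp only [List.length_cons] at hi
      rw [List.getD_cons_succ, List.getD_cons_succ]; exact h2 i (by omega)

private lemma getD_append_walk {V : Type} {R : SimpleGraph V} {u m w : V}
    (A : R.Walk u m) (C : R.Walk m w) (j : ℕ) (hj : j < C.support.length) (d : V) :
    (A.append C).support.getD (A.length + j) d = C.support.getD j d := by
  induction A with
  | nil => simp
  | @cons a b _ h A' ih =>
    rw [Walk.cons_append, Walk.support_cons, Walk.length_cons,
      show A'.length + 1 + j = (A'.length + j) + 1 from by omega, List.getD_cons_succ]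
    exact ih C hj

/-- Let `φ` be a graph self-embedding of the labelled tree `R` (such embeddings preserve
the labelling `lab`).  Then `col r v = col (φ r) v = col (φ r) (φ v)` for all but
finitely many tree vertices `v`; moreover every exceptional `v` is the terminal vertex
of a path of `R` whose initial vertex lies on `P_{r, φ r}` and along which the labels
strictly decrease.

Here `col u w` (the colour of `w` with respect to `u`) is the label of the consecutive
pair (adjacent pair of equal labels) of the path `P_{u,w}` occurring last along that
path; this defining property is taken as a hypothesis, together with `col u u = 0`. -/
theorem colour_preserved_by_selfembeddings_almost_everywhere
    {V : Type} (R : SimpleGraph V) (lab : V → ℕ) (r : V)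
    (htree : R.IsTree)
    (hr : lab r = 0)
    (h0 : ∀ v, lab v = 0 → ∃ a b, a ≠ b ∧ R.neighborSet v = {a, b} ∧
      lab a = 1 ∧ lab b = 1)
    (h1 : ∀ v n, lab v = n + 1 → ∃ a b c, a ≠ b ∧ a ≠ c ∧ b ≠ c ∧
      R.neighborSet v = {a, b, c} ∧ lab a = n ∧ lab b = n + 1 ∧ lab c = n + 2)
    (col : V → V → ℕ)
    (hcol_refl : ∀ v, col v v = 0)
    (hcol : ∀ u w, lab u = 0 → lab w = 0 → u ≠ w →
      ∀ p : R.Walk u w, p.IsPath →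
        ∃ i, i + 1 < p.support.length ∧
          lab (p.support.getD i r) = lab (p.support.getD (i + 1) r) ∧
          col u w = lab (p.support.getD i r) ∧
          (∀ j, i < j → j + 1 < p.support.length →
            lab (p.support.getD j r) ≠ lab (p.support.getD (j + 1) r)))
    (φ : R ↪g R)
    (hφlab : ∀ v, lab (φ v) = lab v) :
    {v | lab v = 0 ∧
      ¬ (col r v = col (φ r) v ∧ col (φ r) v = col (φ r) (φ v))}.Finite ∧
    (∀ v, lab v = 0 →
      ¬ (col r v = col (φ r) v ∧ col (φ r) v = col (φ r) (φ v)) →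
      ∀ p : R.Walk r (φ r), p.IsPath →
        ∃ x, x ∈ p.support ∧ ∃ q : R.Walk x v, q.IsPath ∧
          (∀ i, i + 1 < q.support.length →
            lab (q.support.getD (i + 1) r) < lab (q.support.getD i r))) := by
  classical
  have hφr0 : lab (φ r) = 0 := by rw [hφlab]; exact hr
  -- neighbour label facts
  have nbr : ∀ x y, R.Adj x y → lab y = lab x + 1 ∨ lab y + 1 = lab x ∨ lab y = lab x := by
    intro x y hxy
    have hy : y ∈ R.neighborSet x := hxy
    cases hlx : lab x with
    | zero =>
      obtain ⟨a, b, -, hset, ha, hb⟩ := h0 x hlx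
      rw [hset] at hy
      rcases hy with rfl | rfl <;> omega
    | succ n =>
      obtain ⟨a, b, c, -, -, -, hset, ha, hb, hc⟩ := h1 x n hlx
      rw [hset] at hy
      rcases hy with rfl | rfl | rfl <;> omega
  have udown : ∀ x n, lab x = n + 1 → ∀ y z, R.Adj x y → R.Adj x z →
      lab y = n → lab z = n → y = z := by
    intro x n hlx y z hy hz hly hlz
    obtain ⟨a, b, c, -, -, -, hset, ha, hb, hc⟩ := h1 x n hlx
    have hy' : y ∈ R.neighborSet x := hy
    have hz' : z ∈ R.neighborSet x := hz
    rw [hset] at hy' hz'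
    rcases hy' with rfl | rfl | rfl <;> rcases hz' with rfl | rfl | rfl <;> first | rfl | omega
  -- no-pair increasing walks keep increasing
  have inc : ∀ (b w : V) (q : R.Walk b w), q.IsPath →
      (∀ i, i + 1 < q.support.length →
        lab (q.support.getD i r) ≠ lab (q.support.getD (i + 1) r)) →
      ∀ a, R.Adj a b → lab a + 1 = lab b → a ∉ q.support → lab b ≤ lab w := by
    intro b w q
    induction q with
    | nil => intro _ _ _ _ _ _; exact le_refl _
    | @cons b c w hbc q ih =>
      intro hp hnp a hab hlab ha
      rw [step_cons_iff (fun u v => lab u ≠ lab v) r] at hnp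
      obtain ⟨hne, hnp'⟩ := hnp
      rw [Walk.cons_isPath_iff] at hp
      obtain ⟨hp', hbns⟩ := hp
      rw [Walk.support_cons, List.mem_cons, not_or] at ha
      have hca : c ≠ a := by
        intro h; exact ha.2 (h ▸ q.start_mem_support)
      rcases nbr b c hbc with hup | hdown | heq
      · have := ih hp' hnp' b hbc hup.symm hbns
        omega
      · exfalso
        apply hca
        exact udown b (lab a) hlab.symm c a hbc hab.symm (by omega) rfl
      · exact absurd heq.symm hne
  -- no-pair walks ending at label 0 are strictly decreasing
  have np : ∀ (x w : V) (q : R.Walk x w), q.IsPath → lab w = 0 →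
      (∀ i, i + 1 < q.support.length →
        lab (q.support.getD i r) ≠ lab (q.support.getD (i + 1) r)) →
      (∀ i, i + 1 < q.support.length →
        lab (q.support.getD (i + 1) r) < lab (q.support.getD i r)) := by
    intro x w q
    induction q with
    | nil => intro _ _ _ i hi; rw [Walk.support_nil] at hi; simp at hi
    | @cons x b w hxb q ih =>
      intro hp hw hnp
      rw [step_cons_iff (fun u v => lab u ≠ lab v) r] at hnp
      obtain ⟨hne, hnp'⟩ := hnp
      rw [Walk.cons_isPath_iff] at hp
      rw [step_cons_iff (fun u v => lab v < lab u) r]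
      refine ⟨?_, ih hp.1 hw hnp'⟩
      rcases nbr x b hxb with hup | hdown | heq
      · exfalso
        have := inc b w q hp.1 hnp' x hxb hup.symm hp.2
        omega
      · omega
      · exact absurd heq.symm hne
  -- decreasing walks: all support labels bounded by start
  have decle : ∀ (x w : V) (q : R.Walk x w),
      (∀ i, i + 1 < q.support.length →
        lab (q.support.getD (i + 1) r) < lab (q.support.getD i r)) →
      ∀ y ∈ q.support, lab y ≤ lab x := by
    intro x w q
    induction q with
    | nil => intro _ y hy; rw [Walk.support_nil] at hy; simp at hy; subst hy; exact le_refl _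
    | @cons x b w hxb q ih =>
      intro hd y hy
      rw [step_cons_iff (fun u v => lab v < lab u) r] at hd
      rw [Walk.support_cons, List.mem_cons] at hy
      rcases hy with rfl | hy
      · exact le_refl _
      · have := ih hd.2 y hy; omega
  -- decreasing walks are paths
  have decpath : ∀ (x w : V) (q : R.Walk x w),
      (∀ i, i + 1 < q.support.length →
        lab (q.support.getD (i + 1) r) < lab (q.support.getD i r)) →
      q.IsPath := by
    intro x w q
    induction q with
    | nil => intro _; exact Walk.IsPath.nil
    | @cons x b w hxb q ih =>
      intro hd
      rw [step_cons_iff (fun u v => lab v < lab u) r] at hd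
      rw [Walk.cons_isPath_iff]
      refine ⟨ih hd.2, fun hx => ?_⟩
      have := decle b w q hd.2 x hx
      omega
  -- the terminal label-0 vertex of a decreasing walk is determined by the start
  have uniq : ∀ (n : ℕ) (x : V), lab x = n → ∀ (v u : V) (qv : R.Walk x v) (qu : R.Walk x u),
      (∀ i, i + 1 < qv.support.length →
        lab (qv.support.getD (i + 1) r) < lab (qv.support.getD i r)) →
      (∀ i, i + 1 < qu.support.length →
        lab (qu.support.getD (i + 1) r) < lab (qu.support.getD i r)) →
      lab v = 0 → lab u = 0 → v = u := by
    intro n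
    induction n using Nat.strong_induction_on with
    | _ n ihn =>
      intro x hx v u qv qu hdv hdu hv hu
      match n with
      | 0 =>
        have ev : v = x := by
          cases qv with
          | nil => rfl
          | cons hxb q =>
            rw [step_cons_iff (fun u v => lab v < lab u) r] at hdv
            omega
        have eu : u = x := by
          cases qu with
          | nil => rfl
          | cons hxb q =>
            rw [step_cons_iff (fun u v => lab v < lab u) r] at hdu
            omega
        rw [ev, eu]
      | Nat.succ n =>
        cases qv with
        | nil => exact absurd hv (by omega)
        | @cons _ b _ hxb qv' =>
          cases qu with
          | nil => exact absurd hu (by omega)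
          | @cons _ c _ hxc qu' =>
            rw [step_cons_iff (fun u v => lab v < lab u) r] at hdv hdu
            have hlb : lab b = n := by
              rcases nbr x b hxb with h | h | h <;> omega
            have hlc : lab c = n := by
              rcases nbr x c hxc with h | h | h <;> omega
            have hbc : b = c := udown x n hx b c hxb hxc hlb hlc
            subst hbc
            exact ihn n (by omega) b hlb v u qv' qu' hdv.2 hdu.2 hv hu
  -- splitting a walk at the last vertex meeting the support of p
  have split : ∀ (p : R.Walk r (φ r)) (x v' : V) (P1 : R.Walk x v'),
      (∃ y ∈ P1.support, y ∈ p.support) →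
      ∃ m, m ∈ p.support ∧ ∃ (A : R.Walk x m) (C : R.Walk m v'),
        A.append C = P1 ∧ ∀ y ∈ C.support.tail, y ∉ p.support := by
    intro p x v' P1
    induction P1 with
    | nil =>
      rintro ⟨y, hy, hys⟩
      rw [Walk.support_nil, List.mem_singleton] at hy
      subst hy
      exact ⟨y, hys, Walk.nil, Walk.nil, by simp, by simp⟩
    | @cons x b v' hxb P1' ih =>
      rintro ⟨y, hy, hys⟩
      by_cases hex : ∃ y ∈ P1'.support, y ∈ p.support
      · obtain ⟨m, hm, A', C, hAC, hC⟩ := ih hex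
        exact ⟨m, hm, Walk.cons hxb A', C, by rw [Walk.cons_append, hAC], hC⟩
      · push_neg at hex
        have hyx : y = x := by
          rw [Walk.support_cons, List.mem_cons] at hy
          rcases hy with rfl | hy
          · rfl
          · exact absurd hys (hex y hy)
        subst hyx
        refine ⟨y, hys, Walk.nil, Walk.cons hxb P1', by simp, ?_⟩
        rw [Walk.support_cons, List.tail_cons]
        exact hex
  -- uniqueness of the index provided by hcol
  have colidx : ∀ (l : List V) (i i' : ℕ),
      i + 1 < l.length → lab (l.getD i r) = lab (l.getD (i + 1) r) →
      (∀ j, i < j → j + 1 < l.length → lab (l.getD j r) ≠ lab (l.getD (j + 1) r)) →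
      i' + 1 < l.length → lab (l.getD i' r) = lab (l.getD (i' + 1) r) →
      (∀ j, i' < j → j + 1 < l.length → lab (l.getD j r) ≠ lab (l.getD (j + 1) r)) →
      i = i' := by
    intro l i i' h1' h2 h3 h1'' h2' h3'
    rcases lt_trichotomy i i' with h | h | h
    · exact absurd h2' (h3 i' h h1'')
    · exact h
    · exact absurd h2 (h3' i h h1')
  have hφinj : Function.Injective (φ : V → V) := φ.injective
  -- colour is preserved by the embedding
  have colA : ∀ v, lab v = 0 → col (φ r) (φ v) = col r v := by
    intro v hv
    by_cases hvr : v = r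
    · subst hvr; rw [hcol_refl, hcol_refl]
    · obtain ⟨P1, hP1, -⟩ := htree.existsUnique_path r v
      have hfP1 : (P1.map φ.toHom).IsPath :=
        Walk.map_isPath_of_injective hφinj hP1
      obtain ⟨i, hi, heq, hcoleq, hmax⟩ :=
        hcol r v hr hv (fun h => hvr h.symm) P1 hP1
      obtain ⟨i', hi', heq', hcoleq', hmax'⟩ :=
        hcol (φ r) (φ v) hφr0 (by rw [hφlab]; exact hv)
          (fun h => hvr (hφinj h.symm)) (P1.map φ.toHom) hfP1
      have hcoe : (φ.toHom : V → V) = (φ : V → V) := rfl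
      have hsup : (P1.map φ.toHom).support = P1.support.map (φ : V → V) := by
        rw [Walk.support_map, hcoe]
      have hlen : (P1.map φ.toHom).support.length = P1.support.length := by
        rw [hsup, List.length_map]
      have hlabD : ∀ k, k < P1.support.length →
          lab ((P1.map φ.toHom).support.getD k r) = lab (P1.support.getD k r) := by
        intro k hk
        rw [hsup, List.getD_eq_getElem _ _ (by simpa using hk), List.getElem_map,
          hφlab, List.getD_eq_getElem _ _ hk]
      rw [hlen] at hi' hmax'
      have hii : i = i' := by
        refine colidx P1.support i i' hi heq hmax hi' ?_ ?_
        · rw [← hlabD i' (by omega), ← hlabD (i' + 1) (by omega)]; exact heq'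
        · intro j hj hj1
          rw [← hlabD j (by omega), ← hlabD (j + 1) (by omega)]
          exact hmax' j hj (by omega)
      rw [hcoleq', hcoleq, hii, hlabD i' (by omega)]
  -- core geometric lemma
  have core : ∀ v, lab v = 0 → col r v ≠ col (φ r) v →
      ∀ p : R.Walk r (φ r), p.IsPath →
      ∃ x, x ∈ p.support ∧ ∃ q : R.Walk x v, q.IsPath ∧
        (∀ i, i + 1 < q.support.length →
          lab (q.support.getD (i + 1) r) < lab (q.support.getD i r)) := by
    intro v hv hnecol p hp
    by_cases hvr : v = r
    · subst hvr
      exact ⟨v, p.start_mem_support, Walk.nil, Walk.IsPath.nil,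
        fun i hi => by rw [Walk.support_nil] at hi; simp at hi⟩
    · by_cases hvφ : v = φ r
      · subst hvφ
        exact ⟨φ r, p.end_mem_support, Walk.nil, Walk.IsPath.nil,
          fun i hi => by rw [Walk.support_nil] at hi; simp at hi⟩
      · obtain ⟨P1, hP1, -⟩ := htree.existsUnique_path r v
        obtain ⟨m, hmp, A, C, hAC, hC⟩ := split p r v P1
          ⟨r, P1.start_mem_support, p.start_mem_support⟩
        have hCpath : C.IsPath := by
          rw [← hAC] at hP1
          exact hP1.of_append_right
        obtain ⟨i1, hi1, heq1, hcol1, hmax1⟩ :=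
          hcol r v hr hv (fun h => hvr h.symm) P1 hP1
        have hlenP1 : P1.support.length = A.length + C.support.length := by
          rw [← hAC, Walk.length_support, Walk.length_append, Walk.length_support]
          omega
        have hgd : ∀ j, j < C.support.length →
            P1.support.getD (A.length + j) r = C.support.getD j r := by
          intro j hj
          rw [← hAC]
          exact getD_append_walk A C j hj r
        by_cases hcase : i1 + 1 ≤ A.length
        · have hnpC : ∀ j, j + 1 < C.support.length →
              lab (C.support.getD j r) ≠ lab (C.support.getD (j + 1) r) := by
            intro j hj
            rw [← hgd j (by omega), ← hgd (j + 1) (by omega)]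
            exact hmax1 (A.length + j) (by omega)
              (by rw [hlenP1]; omega)
          have hdC := np m v C hCpath hv hnpC
          exact ⟨m, hmp, C, decpath _ _ C hdC, hdC⟩
        · exfalso
          push_neg at hcase
          have hAi1 : A.length ≤ i1 := by omega
          set j1 := i1 - A.length with hj1def
          have hi1' : i1 = A.length + j1 := by omega
          have hj1C : j1 + 1 < C.support.length := by omega
          have hBpath : (p.dropUntil m hmp).IsPath := hp.dropUntil hmp
          set B := (p.dropUntil m hmp).reverse with hBdef
          have hBp : B.IsPath := hBpath.reverse
          set P2 := B.append C with hP2def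
          have hP2 : P2.IsPath := by
            rw [Walk.isPath_def, Walk.support_append]
            apply List.Nodup.append
            · exact (Walk.isPath_def _).mp hBp
            · have := (Walk.isPath_def _).mp hCpath
              rw [C.support_eq_cons] at this
              exact (List.nodup_cons.mp this).2
            · intro y hyB hyC
              refine hC y hyC (p.support_dropUntil_subset hmp ?_)
              rw [hBdef, Walk.support_reverse, List.mem_reverse] at hyB
              exact hyB
          obtain ⟨i2, hi2, heq2, hcol2, hmax2⟩ :=
            hcol (φ r) v hφr0 hv (fun h => hvφ h.symm) P2 hP2
          have hlenP2 : P2.support.length = B.length + C.support.length := by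
            rw [hP2def, Walk.length_support, Walk.length_append, Walk.length_support]
            omega
          have hgd2 : ∀ j, j < C.support.length →
              P2.support.getD (B.length + j) r = C.support.getD j r := by
            intro j hj
            exact getD_append_walk B C j hj r
          -- the pair of P1 at i1 sits inside C
          have epair : lab (C.support.getD j1 r) = lab (C.support.getD (j1 + 1) r) := by
            rw [← hgd j1 (by omega), ← hgd (j1 + 1) (by omega), ← hi1',
              show A.length + (j1 + 1) = i1 + 1 from by omega]
            exact heq1
          have pairP2 : lab (P2.support.getD (B.length + j1) r)
              = lab (P2.support.getD (B.length + j1 + 1) r) := by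
            rw [hgd2 j1 (by omega),
              show B.length + j1 + 1 = B.length + (j1 + 1) from rfl,
              hgd2 (j1 + 1) (by omega)]
            exact epair
          have hk2 : B.length + j1 ≤ i2 := by
            by_contra hcon
            push_neg at hcon
            exact hmax2 (B.length + j1) hcon (by rw [hlenP2]; omega) pairP2
          set j2 := i2 - B.length with hj2def
          have hi2' : i2 = B.length + j2 := by omega
          have hj2C : j2 + 1 < C.support.length := by
            rw [hlenP2] at hi2; omega
          have epair2 : lab (C.support.getD j2 r) = lab (C.support.getD (j2 + 1) r) := by
            rw [← hgd2 j2 (by omega), ← hgd2 (j2 + 1) (by omega), ← hi2',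
              show B.length + (j2 + 1) = i2 + 1 from by omega]
            exact heq2
          have pairP1 : lab (P1.support.getD (A.length + j2) r)
              = lab (P1.support.getD (A.length + j2 + 1) r) := by
            rw [hgd j2 (by omega),
              show A.length + j2 + 1 = A.length + (j2 + 1) from rfl,
              hgd (j2 + 1) (by omega)]
            exact epair2
          have hj21 : A.length + j2 ≤ i1 := by
            by_contra hcon
            push_neg at hcon
            exact hmax1 (A.length + j2) hcon (by rw [hlenP1]; omega) pairP1
          have hj12 : j1 = j2 := by omega
          apply hnecol
          rw [hcol1, hcol2, hi1', hi2', hgd j1 (by omega), hgd2 j2 (by omega), hj12]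
  -- exceptional vertices have differing colours
  have hexc : ∀ v, lab v = 0 →
      ¬(col r v = col (φ r) v ∧ col (φ r) v = col (φ r) (φ v)) →
      col r v ≠ col (φ r) v := by
    intro v hv0 hvx h
    exact hvx ⟨h, by rw [colA v hv0, ← h]⟩
  constructor
  · obtain ⟨p₀, hp₀, -⟩ := htree.existsUnique_path r (φ r)
    set g : V → V := fun x =>
      if h : ∃ w, lab w = 0 ∧ ∃ q : R.Walk x w,
          (∀ i, i + 1 < q.support.length →
            lab (q.support.getD (i + 1) r) < lab (q.support.getD i r))
      then h.choose else r with hg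
    apply Set.Finite.subset ((p₀.support.finite_toSet).image g)
    rintro v ⟨hv0, hvx⟩
    obtain ⟨x, hx, q, hqp, hqd⟩ := core v hv0 (hexc v hv0 hvx) p₀ hp₀
    refine ⟨x, hx, ?_⟩
    have hex : ∃ w, lab w = 0 ∧ ∃ q' : R.Walk x w,
        (∀ i, i + 1 < q'.support.length →
          lab (q'.support.getD (i + 1) r) < lab (q'.support.getD i r)) :=
      ⟨v, hv0, q, hqd⟩
    rw [hg]
    simp only
    rw [dif_pos hex]
    obtain ⟨hw0, q', hq'd⟩ := hex.choose_spec
    exact uniq (lab x) x rfl _ v q' q hq'd hqd hw0 hv0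
  · intro v hv0 hvx p hp
    exact core v hv0 (hexc v hv0 hvx) p hp
end

section
/- For any vertices u, v, w of the labelled tree R, if min(hth_u(w), hth_v(w)) ≥ hth_u(v), then hth_u(w) = hth_v(w). -/
open SimpleGraph

/-- For any vertices `u, v, w` of the labelled tree `R`, if
`min (hth u w) (hth v w) ≥ hth u v` then `hth u w = hth v w`.

Here `hth v w` (the height of `w` with respect to `v`) is the maximum label occurring
on the path `P_{v,w}`; this defining property is taken as a hypothesis. -/
theorem height_agreement
    {V : Type} (R : SimpleGraph V) (lab : V → ℕ) (r : V)
    (htree : R.IsTree)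
    (hr : lab r = 0)
    (h0 : ∀ v, lab v = 0 → ∃ a b, a ≠ b ∧ R.neighborSet v = {a, b} ∧
      lab a = 1 ∧ lab b = 1)
    (h1 : ∀ v n, lab v = n + 1 → ∃ a b c, a ≠ b ∧ a ≠ c ∧ b ≠ c ∧
      R.neighborSet v = {a, b, c} ∧ lab a = n ∧ lab b = n + 1 ∧ lab c = n + 2)
    (hth : V → V → ℕ)
    (hhth : ∀ v w, ∀ p : R.Walk v w, p.IsPath →
      (∃ x ∈ p.support, lab x = hth v w) ∧ (∀ x ∈ p.support, lab x ≤ hth v w)) :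
    ∀ u v w, hth u v ≤ min (hth u w) (hth v w) → hth u w = hth v w := by
  classical
  -- choose a path between any two vertices
  have hpath : ∀ a b : V, ∃ p : R.Walk a b, p.IsPath := by
    intro a b
    obtain ⟨q⟩ := htree.isConnected.preconnected a b
    exact ⟨q.toPath, q.toPath.property⟩
  -- symmetry of hth
  have hsymm : ∀ a b : V, hth a b = hth b a := by
    intro a b
    obtain ⟨p, hp⟩ := hpath a b
    obtain ⟨⟨x, hx, hxl⟩, hall⟩ := hhth a b p hp
    obtain ⟨⟨y, hy, hyl⟩, hall'⟩ := hhth b a p.reverse hp.reverse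
    rw [Walk.support_reverse] at hy hall'
    exact le_antisymm (hxl ▸ hall' x (List.mem_reverse.2 hx))
      (hyl ▸ hall y (List.mem_reverse.1 hy))
  -- triangle-type bound
  have htri : ∀ a b c : V, hth a c ≤ max (hth a b) (hth b c) := by
    intro a b c
    obtain ⟨pab, hpab⟩ := hpath a b
    obtain ⟨pbc, hpbc⟩ := hpath b c
    obtain ⟨pac, hpac⟩ := hpath a c
    obtain ⟨⟨x, hx, hxl⟩, -⟩ := hhth a c pac hpac
    -- x is on the walk pab.append pbc, since the unique path's support is contained in it
    have hxw : x ∈ (pab.append pbc).support := by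
      have huniq : (⟨pac, hpac⟩ : R.Path a c) = (pab.append pbc).toPath :=
        htree.IsAcyclic.path_unique _ _
      have : x ∈ ((pab.append pbc).toPath : R.Walk a c).support := by
        rw [← huniq]; exact hx
      exact Walk.support_bypass_subset _ this
    rw [Walk.mem_support_append_iff] at hxw
    rcases hxw with h | h
    · exact hxl ▸ le_max_of_le_left ((hhth a b pab hpab).2 x h)
    · exact hxl ▸ le_max_of_le_right ((hhth b c pbc hpbc).2 x h)
  intro u v w h
  have h1' : hth u w ≤ hth v w := by
    have := htri u v w
    omega
  have h2' : hth v w ≤ hth u w := by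
    have := htri v u w
    rw [hsymm v u] at this
    omega
  omega
end

section
/- In the labelled tree R, for every tree vertex v ≠ r: (1) spin_v(r) = sign_r(v); (2) spin_v(w) = spin_r(w) for every tree vertex w distinct from r and v that does not lie on P_{r,v}; and (3) spin_v(w) = −spin_r(w) for every tree vertex w lying on P_{r,v} with w ≠ r and w ≠ v. -/
open SimpleGraph

/-- The number of consecutive pairs (adjacent pairs of equal labels) along a list of
vertices (the support of a walk). -/
def cpCount {V : Type} (lab : V → ℕ) (l : List V) : ℕ :=
  (l.zip l.tail).countP (fun q => decide (lab q.1 = lab q.2))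

/-- The number of tree vertices (vertices of label `0`) on a list of vertices. -/
def tvCount {V : Type} (lab : V → ℕ) (l : List V) : ℕ :=
  l.countP (fun x => decide (lab x = 0))

/-- `a` and `b` lie in the same connected component of `R − v`:
some walk from `a` to `b` avoids `v`. -/
def SameSide {V : Type} (R : SimpleGraph V) (v a b : V) : Prop :=
  ∃ p : R.Walk a b, v ∉ p.support

section Helpers

variable {V : Type} {lab : V → ℕ}

lemma cpCount_cons_cons (a b : V) (l : List V) :
    cpCount lab (a :: b :: l) = (if lab a = lab b then 1 else 0) + cpCount lab (b :: l) := by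
  simp [cpCount, List.countP_cons]
  by_cases h : lab a = lab b <;> simp [h, Nat.add_comm]

lemma cpCount_single (a : V) : cpCount lab [a] = 0 := by simp [cpCount]

lemma cpCount_append (l1 l2 : List V) (h : l1 ≠ []) :
    cpCount lab (l1 ++ l2) = cpCount lab l1 + cpCount lab (l1.getLast h :: l2) := by
  induction l1 with
  | nil => simp at h
  | cons a t ih =>
    cases t with
    | nil => simp [cpCount_single]
    | cons b t' =>
      have ih' : cpCount lab (b :: (t' ++ l2)) =
          cpCount lab (b :: t') + cpCount lab ((b :: t').getLast (by simp) :: l2) := by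
        rw [← List.cons_append]; exact ih (by simp)
      rw [List.cons_append, List.cons_append, cpCount_cons_cons, ih',
        cpCount_cons_cons (lab := lab) (a := a) (b := b) (l := t'),
        List.getLast_cons (show (b :: t') ≠ [] by simp)]
      ring

lemma cpCount_reverse (l : List V) : cpCount lab l.reverse = cpCount lab l := by
  induction l with
  | nil => rfl
  | cons a t ih =>
    cases t with
    | nil => rfl
    | cons b t' =>
      rw [cpCount_cons_cons, List.reverse_cons,
        cpCount_append _ _ (by simp), ih, List.getLast_reverse]
      simp [cpCount_single, cpCount_cons_cons, eq_comm]
      ring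

lemma tvCount_reverse (l : List V) : tvCount lab l.reverse = tvCount lab l := by
  simp [tvCount, List.countP_reverse]

variable {R : SimpleGraph V}

lemma walk_cp_append {u m v : V} (p : R.Walk u m) (q : R.Walk m v) :
    cpCount lab (p.append q).support = cpCount lab p.support + cpCount lab q.support := by
  rw [Walk.support_append, cpCount_append _ _ (Walk.support_ne_nil p), p.getLast_support,
    ← Walk.support_eq_cons]

lemma walk_tv_append {u m v : V} (p : R.Walk u m) (q : R.Walk m v) :
    tvCount lab (p.append q).support + (if lab m = 0 then 1 else 0)
      = tvCount lab p.support + tvCount lab q.support := by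
  have hq : q.support = m :: q.support.tail := q.support_eq_cons
  rw [Walk.support_append, tvCount, tvCount, tvCount, List.countP_append, hq, List.countP_cons]
  by_cases h : lab m = 0 <;> simp [h] <;> ring

lemma path_unique (htree : R.IsTree) {a b : V} (p q : R.Walk a b)
    (hp : p.IsPath) (hq : q.IsPath) : p = q :=
  (htree.existsUnique_path a b).unique hp hq

lemma median (htree : R.IsTree) :
    ∀ {r v : V} (p : R.Walk r v), p.IsPath → ∀ {w : V} (q : R.Walk r w), q.IsPath →
    ∃ (m : V) (A : R.Walk r m) (B : R.Walk m v) (C : R.Walk m w),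
      p = A.append B ∧ q = A.append C ∧ ∀ x ∈ B.support, x ∈ C.support → x = m := by
  haveI : DecidableEq V := Classical.decEq V
  intro r v p
  induction p with
  | nil =>
    intro _ w q hq
    exact ⟨_, Walk.nil, Walk.nil, q, rfl, rfl, by intro x hx _; simpa using hx⟩
  | @cons r a v h p' ih =>
    intro hp w q hq
    cases q with
    | nil =>
      exact ⟨r, Walk.nil, Walk.cons h p', Walk.nil, rfl, rfl,
        by intro x _ hx; simpa using hx⟩
    | @cons _ b _ h2 q' =>
      by_cases hab : a = b
      · subst hab
        obtain ⟨m, A, B, C, e1, e2, hint⟩ := ih hp.of_cons q' hq.of_cons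
        exact ⟨m, Walk.cons h A, B, C,
          (congrArg (Walk.cons h) e1).trans (Walk.cons_append h A B).symm,
          (congrArg (Walk.cons h2) e2).trans (Walk.cons_append h2 A C).symm,
          hint⟩
      · refine ⟨r, Walk.nil, Walk.cons h p', Walk.cons h2 q', rfl, rfl, ?_⟩
        intro x hx1 hx2
        by_contra hxr
        have hx1' : x ∈ p'.support := by
          rcases List.mem_cons.mp (by simpa using hx1) with h' | h'
          · exact absurd h' hxr
          · exact h'
        have hx2' : x ∈ q'.support := by
          rcases List.mem_cons.mp (by simpa using hx2) with h' | h'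
          · exact absurd h' hxr
          · exact h'
        have hrp : r ∉ p'.support := (Walk.cons_isPath_iff h p').mp hp |>.2
        have hrq : r ∉ q'.support := (Walk.cons_isPath_iff h2 q').mp hq |>.2
        have hw1 : (Walk.cons h (p'.takeUntil x hx1')).IsPath :=
          (Walk.cons_isPath_iff _ _).mpr ⟨hp.of_cons.takeUntil hx1',
            fun hr => hrp (Walk.support_takeUntil_subset _ _ hr)⟩
        have hw2 : (Walk.cons h2 (q'.takeUntil x hx2')).IsPath :=
          (Walk.cons_isPath_iff _ _).mpr ⟨hq.of_cons.takeUntil hx2',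
            fun hr => hrq (Walk.support_takeUntil_subset _ _ hr)⟩
        have e := path_unique htree _ _ hw1 hw2
        have e' := congrArg Walk.support e
        rw [Walk.support_cons, Walk.support_cons, (p'.takeUntil x hx1').support_eq_cons,
          (q'.takeUntil x hx2').support_eq_cons] at e'
        simp only [List.cons.injEq] at e'
        exact hab e'.2.1

lemma sameSide_iff (htree : R.IsTree) {a b : V} (x : V) (p : R.Walk a b) (hp : p.IsPath) :
    SameSide R x a b ↔ x ∉ p.support := by
  haveI : DecidableEq V := Classical.decEq V
  constructor
  · rintro ⟨W, hW⟩ hx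
    have e := path_unique htree p W.bypass hp W.bypass_isPath
    exact hW (W.support_bypass_subset (e ▸ hx))
  · intro h; exact ⟨p, h⟩

lemma exists_adj_of_walk {u v : V} (W : R.Walk u v) (h : u ≠ v) :
    ∃ (a : V) (ha : R.Adj u a) (W' : R.Walk a v), W = Walk.cons ha W' := by
  cases W with
  | nil => exact absurd rfl h
  | cons ha W' => exact ⟨_, ha, W', rfl⟩

lemma pow_neg_one_congr {a b : ℕ} (h : a % 2 = b % 2) : ((-1 : ℤ)) ^ a = (-1) ^ b := by
  conv_lhs => rw [← Nat.div_add_mod a 2]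
  conv_rhs => rw [← Nat.div_add_mod b 2]
  rw [pow_add, pow_add, pow_mul, pow_mul]
  norm_num [h]

end Helpers

/-- In the labelled tree `R`, for every tree vertex `v ≠ r`:
(1) `spin v r = sign r v`;
(2) `spin v w = spin r w` for every tree vertex `w ≠ r, v` not lying on `P_{r,v}`;
(3) `spin v w = −spin r w` for every tree vertex `w ≠ r, v` lying on `P_{r,v}`.

The sign and spin functions are axiomatised by their defining properties:
`sign r` takes value `+1` on one component of `R − r` and `−1` on the other;
`spin v u = sign v u * (−1)^(cp + tv)` where `cp` is the number of consecutive pairs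
on `P_{v,u}` and `tv` the number of tree vertices on `P_{v,u}`; and for a tree
vertex `v ≠ r`, `sign v u = spin r v` if `u` is on the same side of `v` as `r`,
and `sign v u = −spin r v` otherwise. -/
theorem spin_compared_with_root
    {V : Type} (R : SimpleGraph V) (lab : V → ℕ) (r : V)
    (htree : R.IsTree)
    (hr : lab r = 0)
    (h0 : ∀ v, lab v = 0 → ∃ a b, a ≠ b ∧ R.neighborSet v = {a, b} ∧
      lab a = 1 ∧ lab b = 1)
    (h1 : ∀ v n, lab v = n + 1 → ∃ a b c, a ≠ b ∧ a ≠ c ∧ b ≠ c ∧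
      R.neighborSet v = {a, b, c} ∧ lab a = n ∧ lab b = n + 1 ∧ lab c = n + 2)
    (sign : V → V → ℤ) (spin : V → V → ℤ)
    (hsignr_val : ∀ u, u ≠ r → sign r u = 1 ∨ sign r u = -1)
    (hsignr_comp : ∀ a b, a ≠ r → b ≠ r → (sign r a = sign r b ↔ SameSide R r a b))
    (hspin : ∀ v u, lab v = 0 → lab u = 0 → u ≠ v →
      ∀ p : R.Walk v u, p.IsPath →
        spin v u = sign v u * (-1) ^ (cpCount lab p.support + tvCount lab p.support))
    (hsignv : ∀ v, lab v = 0 → v ≠ r → ∀ u, u ≠ v →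
      (SameSide R v u r → sign v u = spin r v) ∧
      (¬ SameSide R v u r → sign v u = - spin r v)) :
    ∀ v, lab v = 0 → v ≠ r →
      spin v r = sign r v ∧
      (∀ p : R.Walk r v, p.IsPath →
        ∀ w, lab w = 0 → w ≠ r → w ≠ v →
          (w ∉ p.support → spin v w = spin r w) ∧
          (w ∈ p.support → spin v w = - spin r w)) := by
  haveI : DecidableEq V := Classical.decEq V
  intro v hv hvr
  have hsvr : sign v r = spin r v :=
    (hsignv v hv hvr r (Ne.symm hvr)).1 ⟨Walk.nil, by simpa using hvr⟩
  constructor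
  · -- part 1
    obtain ⟨p0, hp0, -⟩ := htree.existsUnique_path r v
    have h1' := hspin r v hr hv hvr p0 hp0
    have h2' := hspin v r hv hr (Ne.symm hvr) p0.reverse hp0.reverse
    rw [Walk.support_reverse, cpCount_reverse, tvCount_reverse] at h2'
    rw [h2', hsvr, h1', mul_assoc, ← pow_add]
    rw [Even.neg_one_pow ⟨_, rfl⟩, mul_one]
  · intro p hp w hw hwr hwv
    constructor
    · -- case 2 : w not on the path
      intro hwp
      obtain ⟨q, hq, -⟩ := htree.existsUnique_path r w
      obtain ⟨m, A, B, C, e1, e2, hBC⟩ := median htree p hp q hq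
      have hA : A.IsPath := by rw [e1] at hp; exact hp.of_append_left
      have hB : B.IsPath := by rw [e1] at hp; exact hp.of_append_right
      have hC : C.IsPath := by rw [e2] at hq; exact hq.of_append_right
      have hndp : (A.support ++ B.support.tail).Nodup := by
        rw [← Walk.support_append, ← e1]; exact hp.support_nodup
      have hndq : (A.support ++ C.support.tail).Nodup := by
        rw [← Walk.support_append, ← e2]; exact hq.support_nodup
      have hdisj1 : A.support.Disjoint B.support.tail := (List.nodup_append'.mp hndp).2.2
      have hdisj2 : A.support.Disjoint C.support.tail := (List.nodup_append'.mp hndq).2.2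
      have hmp : m ∈ p.support := by
        rw [e1]; exact Walk.subset_support_append_left A B A.end_mem_support
      have hmw : m ≠ w := fun e => hwp (e ▸ hmp)
      have hmCt : m ∉ C.support.tail := by
        have := hC.support_nodup
        rw [C.support_eq_cons] at this
        exact (List.nodup_cons.mp this).1
      have hsrw := hspin r w hr hw hwr q hq
      have hcpq : cpCount lab q.support = cpCount lab A.support + cpCount lab C.support := by
        rw [e2]; exact walk_cp_append A C
      by_cases hmv : m = v
      · subst hmv
        have hBnil : B = Walk.nil := Walk.isPath_iff_eq_nil.mp hB
        have hpA : p = A := by rw [e1, hBnil, Walk.append_nil]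
        have hvq : m ∈ q.support := by
          rw [e2]; exact Walk.subset_support_append_left A C A.end_mem_support
        have hnss : ¬ SameSide R m w r := by
          rw [sameSide_iff htree m q.reverse hq.reverse, Walk.support_reverse,
            List.mem_reverse]
          simpa using hvq
        have hsvw : sign m w = - spin r m := (hsignv m hv hvr w hwv).2 hnss
        have hsw := hspin m w hv hw hwv C hC
        have hsrv := hspin r m hr hv hvr p hp
        rw [hpA] at hsrv
        have htvq : tvCount lab q.support + 1
            = tvCount lab A.support + tvCount lab C.support := by
          have h' := walk_tv_append (lab := lab) A C
          rw [← e2] at h'; simpa [hv] using h'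
        have hsrvw : sign r m = sign r w := by
          refine (hsignr_comp m w hvr hwr).mpr ⟨C, ?_⟩
          rw [C.support_eq_cons]
          intro hmem
          rcases List.mem_cons.mp hmem with h' | h'
          · exact hvr h'.symm
          · exact hdisj2 A.start_mem_support h'
        have key : ((-1 : ℤ)) ^ (cpCount lab A.support + tvCount lab A.support
              + (cpCount lab C.support + tvCount lab C.support))
            = (-1) ^ (cpCount lab q.support + tvCount lab q.support + 1) :=
          pow_neg_one_congr (by omega)
        rw [hsw, hsvw, hsrv, hsrw, ← hsrvw]
        linear_combination (- sign r m) * key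
      · -- m ≠ v
        have hvB : v ∈ B.support.tail := by
          have := B.end_mem_support
          rw [B.support_eq_cons] at this
          rcases List.mem_cons.mp this with h' | h'
          · exact absurd h'.symm hmv
          · exact h'
        have hvA : v ∉ A.support := fun h' => hdisj1 h' hvB
        have hvC : v ∉ C.support := fun h' =>
          hmv ((hBC v B.end_mem_support h').symm)
        have hvq : v ∉ q.support := by
          rw [e2, Walk.support_append]
          intro hmem
          rcases List.mem_append.mp hmem with h' | h'
          · exact hvA h'
          · exact hvC (List.tail_subset _ h')
        have hsvw : sign v w = spin r v := (hsignv v hv hvr w hwv).1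
          ⟨q.reverse, by rw [Walk.support_reverse, List.mem_reverse]; exact hvq⟩
        -- the path from v to w
        have hdisjBC : (B.support.reverse).Disjoint C.support.tail := by
          intro x hx1 hx2
          exact hmCt ((hBC x (List.mem_reverse.mp hx1) (List.tail_subset _ hx2)) ▸ hx2)
        have hD : (B.reverse.append C).IsPath := by
          rw [Walk.isPath_def, Walk.support_append, Walk.support_reverse]
          exact List.nodup_append'.mpr ⟨List.nodup_reverse.mpr hB.support_nodup,
            (List.nodup_append'.mp hndq).2.1, hdisjBC⟩
        have hsw := hspin v w hv hw hwv (B.reverse.append C) hD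
        have hsrv := hspin r v hr hv hvr p hp
        have hcpD : cpCount lab (B.reverse.append C).support
            = cpCount lab B.support + cpCount lab C.support := by
          rw [walk_cp_append, Walk.support_reverse, cpCount_reverse]
        have hcpp : cpCount lab p.support
            = cpCount lab A.support + cpCount lab B.support := by
          rw [e1]; exact walk_cp_append A B
        have htvD := walk_tv_append (lab := lab) B.reverse C
        rw [Walk.support_reverse, tvCount_reverse] at htvD
        have htvp := walk_tv_append (lab := lab) A B
        rw [← e1] at htvp
        have htvq := walk_tv_append (lab := lab) A C
        rw [← e2] at htvq
        by_cases hmr : m = r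
        · subst hmr
          have e0 : (if lab m = 0 then (1:ℕ) else 0) = 1 := if_pos hr
          rw [e0] at htvD htvp htvq
          have hmem : m ∈ (B.reverse.append C).support :=
            Walk.subset_support_append_left B.reverse C
              (by rw [Walk.support_reverse, List.mem_reverse]; exact B.start_mem_support)
          have hne : sign m v ≠ sign m w := by
            intro e
            exact (sameSide_iff htree m (B.reverse.append C) hD).mp
              ((hsignr_comp v w hvr hwr).mp e) hmem
          have hsrvw : sign m v = - sign m w := by
            rcases hsignr_val v hvr with h' | h' <;> rcases hsignr_val w hwr with h'' | h''
            · exact absurd (h'.trans h''.symm) hne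
            · norm_num [h', h'']
            · norm_num [h', h'']
            · exact absurd (h'.trans h''.symm) hne
          have key : ((-1 : ℤ)) ^ (cpCount lab p.support + tvCount lab p.support
                + (cpCount lab B.support + cpCount lab C.support
                  + tvCount lab (B.reverse.append C).support))
              = (-1) ^ (cpCount lab q.support + tvCount lab q.support + 1) :=
            pow_neg_one_congr (by omega)
          rw [hsw, hsvw, hsrv, hsrw, hsrvw, hcpD]
          linear_combination (- sign m w) * key
        · -- m ≠ r : m has three distinct neighbours, so lab m ≠ 0
          have hm0 : lab m ≠ 0 := by
            intro hm0
            obtain ⟨x, y, hxy, hnbr, -, -⟩ := h0 m hm0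
            obtain ⟨b0, hb, B', hBe⟩ := exists_adj_of_walk B hmv
            obtain ⟨c0, hc, C', hCe⟩ := exists_adj_of_walk C hmw
            obtain ⟨a0, ha, A', hAe⟩ := exists_adj_of_walk A.reverse hmr
            have ha0A : a0 ∈ A.support := by
              have : a0 ∈ A.reverse.support := by
                rw [hAe, Walk.support_cons]
                exact List.mem_cons_of_mem _ A'.start_mem_support
              rwa [Walk.support_reverse, List.mem_reverse] at this
            have hb0B : b0 ∈ B.support.tail := by
              rw [hBe, Walk.support_cons]; exact B'.start_mem_support
            have hc0C : c0 ∈ C.support.tail := by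
              rw [hCe, Walk.support_cons]; exact C'.start_mem_support
            have hab0 : a0 ≠ b0 := fun e => hdisj1 ha0A (e ▸ hb0B)
            have hac0 : a0 ≠ c0 := fun e => hdisj2 ha0A (e ▸ hc0C)
            have hmBt : m ∉ B.support.tail := by
              have := hB.support_nodup
              rw [B.support_eq_cons] at this
              exact (List.nodup_cons.mp this).1
            have hbc0 : b0 ≠ c0 := fun e => hmBt
              ((hBC b0 (List.tail_subset _ hb0B) (e ▸ List.tail_subset _ hc0C)) ▸ hb0B)
            have hma : a0 ∈ ({x, y} : Set V) := by rw [← hnbr]; exact ha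
            have hmb : b0 ∈ ({x, y} : Set V) := by rw [← hnbr]; exact hb
            have hmc : c0 ∈ ({x, y} : Set V) := by rw [← hnbr]; exact hc
            simp only [Set.mem_insert_iff, Set.mem_singleton_iff] at hma hmb hmc
            rcases hma with ha1 | ha1 <;> rcases hmb with hb1 | hb1 <;>
              rcases hmc with hc1 | hc1
            · exact hab0 (ha1.trans hb1.symm)
            · exact hab0 (ha1.trans hb1.symm)
            · exact hac0 (ha1.trans hc1.symm)
            · exact hbc0 (hb1.trans hc1.symm)
            · exact hbc0 (hb1.trans hc1.symm)
            · exact hac0 (ha1.trans hc1.symm)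
            · exact hab0 (ha1.trans hb1.symm)
            · exact hab0 (ha1.trans hb1.symm)
          rw [if_neg hm0] at htvD htvp htvq
          simp only [Nat.add_zero] at htvD htvp htvq
          have hrB : r ∉ B.support := by
            rw [B.support_eq_cons]
            intro hmem
            rcases List.mem_cons.mp hmem with h' | h'
            · exact hmr h'.symm
            · exact hdisj1 A.start_mem_support h'
          have hrD : r ∉ (B.reverse.append C).support := by
            rw [Walk.support_append, Walk.support_reverse]
            intro hmem
            rcases List.mem_append.mp hmem with h' | h'
            · exact hrB (List.mem_reverse.mp h')
            · exact hdisj2 A.start_mem_support h'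
          have hsrvw : sign r v = sign r w :=
            (hsignr_comp v w hvr hwr).mpr ⟨B.reverse.append C, hrD⟩
          have key : ((-1 : ℤ)) ^ (cpCount lab p.support + tvCount lab p.support
                + (cpCount lab B.support + cpCount lab C.support
                  + tvCount lab (B.reverse.append C).support))
              = (-1) ^ (cpCount lab q.support + tvCount lab q.support) :=
            pow_neg_one_congr (by omega)
          rw [hsw, hsvw, hsrv, hsrw, ← hsrvw, hcpD]
          linear_combination (sign r v) * key
    · -- case 3 : w on the path
      intro hwp
      obtain ⟨A, B, hspec, hA, hB⟩ :
          ∃ (A : R.Walk r w) (B : R.Walk w v), A.append B = p ∧ A.IsPath ∧ B.IsPath :=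
        ⟨_, _, p.take_spec hwp, hp.takeUntil hwp, hp.dropUntil hwp⟩
      have hnd : (A.support ++ B.support.tail).Nodup := by
        rw [← Walk.support_append, hspec]; exact hp.support_nodup
      have hdisj : A.support.Disjoint B.support.tail := (List.nodup_append'.mp hnd).2.2
      have hvB : v ∈ B.support.tail := by
        have := B.end_mem_support
        rw [B.support_eq_cons] at this
        rcases List.mem_cons.mp this with h' | h'
        · exact absurd h'.symm hwv
        · exact h'
      have hvA : v ∉ A.support := fun h' => hdisj h' hvB
      have hsvw : sign v w = spin r v := (hsignv v hv hvr w hwv).1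
        ⟨A.reverse, by rw [Walk.support_reverse, List.mem_reverse]; exact hvA⟩
      have hsrvw : sign r v = sign r w := by
        refine (hsignr_comp v w hvr hwr).mpr ⟨B.reverse, ?_⟩
        rw [Walk.support_reverse, List.mem_reverse, B.support_eq_cons]
        intro hmem
        rcases List.mem_cons.mp hmem with h' | h'
        · exact hwr h'.symm
        · exact hdisj A.start_mem_support h'
      have hsw := hspin v w hv hw hwv B.reverse hB.reverse
      rw [Walk.support_reverse, cpCount_reverse, tvCount_reverse] at hsw
      have hsrv := hspin r v hr hv hvr p hp
      have hsrw := hspin r w hr hw hwr A hA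
      have hcp : cpCount lab p.support
          = cpCount lab A.support + cpCount lab B.support := by
        rw [← hspec]; exact walk_cp_append A B
      have htv : tvCount lab p.support + 1
          = tvCount lab A.support + tvCount lab B.support := by
        have h' := walk_tv_append (lab := lab) A B
        rw [hspec] at h'; simpa [hw] using h'
      have key : ((-1 : ℤ)) ^ (cpCount lab p.support + tvCount lab p.support
            + (cpCount lab B.support + tvCount lab B.support))
          = (-1) ^ (cpCount lab A.support + tvCount lab A.support + 1) :=
        pow_neg_one_congr (by omega)
      rw [hsw, hsvw, hsrv, hsrw, ← hsrvw]
      linear_combination (sign r v) * key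
end

section
/- Every type assignment tp that differs from tp₀ on only finitely many integers makes D_tp equimorphic with D_{tp₀}; conversely, every typed double ray D_tp equimorphic with D_{tp₀} is isomorphic to D_{tp'} for some type assignment tp' differing from tp₀ on only finitely many integers; and the number of isomorphism classes of typed double rays equimorphic with D_{tp₀} is exactly ℵ₀. -/
open SimpleGraph

/-- The double ray: the graph on `ℤ` with edges `{i, i+1}`. -/
def doubleRay : SimpleGraph ℤ where
  Adj m n := m + 1 = n ∨ n + 1 = m
  symm := ⟨by intro a b h; tauto⟩
  loopless := ⟨by intro a h; omega⟩

/-- An embedding of the typed double ray `D_tp` into `D_tp'`: a graph embedding `φ` of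
the double ray into itself with `tp i ≤ tp' (φ i)` for all `i`. -/
def TypedEmb (tp tp' : ℤ → Fin 2) : Prop :=
  ∃ φ : doubleRay ↪g doubleRay, ∀ i, tp i ≤ tp' (φ i)

/-- An isomorphism of the typed double rays `D_tp` and `D_tp'`: a graph isomorphism `φ`
of the double ray with `tp i = tp' (φ i)` for all `i`. -/
def TypedIso (tp tp' : ℤ → Fin 2) : Prop :=
  ∃ φ : doubleRay ≃g doubleRay, ∀ i, tp i = tp' (φ i)

/-- `D_tp` and `D_tp'` are equimorphic (siblings). -/
def TypedEquimorphic (tp tp' : ℤ → Fin 2) : Prop :=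
  TypedEmb tp tp' ∧ TypedEmb tp' tp

/-- The type assignment `tp₀`: value `0` for `i ≤ 0` and `1` for `i > 0`. -/
def tp0 : ℤ → Fin 2 := fun i => if i ≤ 0 then 0 else 1

section Aux
lemma doubleRay_adj {m n : ℤ} : doubleRay.Adj m n ↔ (m + 1 = n ∨ n + 1 = m) := Iff.rfl
def shiftIso (c : ℤ) : doubleRay ≃g doubleRay where
  toEquiv := Equiv.addRight c
  map_rel_iff' := by
    intro a b; simp only [Equiv.coe_addRight]; rw [doubleRay_adj, doubleRay_adj]; omega
def negIso : doubleRay ≃g doubleRay where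
  toEquiv := Equiv.neg ℤ
  map_rel_iff' := by
    intro a b; simp only [Equiv.neg_apply]; rw [doubleRay_adj, doubleRay_adj]; omega




lemma emb_form (φ : doubleRay ↪g doubleRay) :
    ∃ c ε : ℤ, (ε = 1 ∨ ε = -1) ∧ ∀ i, φ i = c + ε * i := by
  have hstep : ∀ i : ℤ, φ (i + 1) = φ i + 1 ∨ φ (i + 1) = φ i - 1 := by
    intro i
    have h : doubleRay.Adj (φ i) (φ (i + 1)) :=
      φ.map_adj_iff.mpr (doubleRay_adj.mpr (Or.inl rfl))
    rw [doubleRay_adj] at h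
    omega
  have key : ∀ i : ℤ, φ (i + 1) - φ i = φ (i + 2) - φ (i + 1) := by
    intro i
    have h1 := hstep i
    have h2 := hstep (i + 1)
    rw [show i + 1 + 1 = i + 2 from by ring] at h2
    have hne : φ (i + 2) ≠ φ i := by
      intro h
      have h3 := φ.injective h
      omega
    omega
  have main : ∀ i : ℤ, φ i = φ 0 + (φ 1 - φ 0) * i ∧ φ (i + 1) = φ 0 + (φ 1 - φ 0) * (i + 1) := by
    intro i
    induction i using Int.induction_on with
    | zero =>
      refine ⟨by ring, ?_⟩
      rw [show (0 : ℤ) + 1 = 1 from by ring]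
      ring
    | succ k ih =>
      obtain ⟨ih1, ih2⟩ := ih
      refine ⟨ih2, ?_⟩
      have hk := key (k : ℤ)
      rw [show (k : ℤ) + 1 + 1 = (k : ℤ) + 2 from by ring]
      linear_combination 2 * ih2 - ih1 - hk
    | pred k ih =>
      obtain ⟨ih1, ih2⟩ := ih
      constructor
      · have hk := key (-(k : ℤ) - 1)
        rw [show -(k : ℤ) - 1 + 1 = -(k : ℤ) from by ring,
            show -(k : ℤ) - 1 + 2 = -(k : ℤ) + 1 from by ring] at hk
        linear_combination 2 * ih1 - ih2 - hk
      · rw [show -(k : ℤ) - 1 + 1 = -(k : ℤ) from by ring]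
        exact ih1
  refine ⟨φ 0, φ 1 - φ 0, ?_, fun i => (main i).1⟩
  have := hstep 0
  rw [show (0 : ℤ) + 1 = 1 from by ring] at this
  omega

lemma fin2_le_one : ∀ a : Fin 2, a ≤ 1 := by decide
lemma fin2_zero_le : ∀ a : Fin 2, (0 : Fin 2) ≤ a := by decide
lemma fin2_eq : ∀ a : Fin 2, a = 0 ∨ a = 1 := by decide
lemma fin2_one_le : ∀ a : Fin 2, 1 ≤ a → a = 1 := by decide

lemma typedEmb_iff {tp tp' : ℤ → Fin 2} :
    TypedEmb tp tp' ↔ ∃ c, (∀ i, tp i ≤ tp' (i + c)) ∨ (∀ i, tp i ≤ tp' (c - i)) := by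
  constructor
  · rintro ⟨φ, hφ⟩
    obtain ⟨c, ε, hε, hform⟩ := emb_form φ
    refine ⟨c, ?_⟩
    rcases hε with h | h
    · left; intro i
      have h2 := hφ i
      rw [hform i, h, show c + 1 * i = i + c from by ring] at h2
      exact h2
    · right; intro i
      have h2 := hφ i
      rw [hform i, h, show c + (-1) * i = c - i from by ring] at h2
      exact h2
  · rintro ⟨c, h | h⟩
    · exact ⟨(shiftIso c).toEmbedding, fun i => h i⟩
    · refine ⟨SimpleGraph.Iso.toEmbedding (negIso.trans (shiftIso c)), fun i => ?_⟩
      have h2 := h i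
      rw [show c - i = -i + c from by ring] at h2
      exact h2

lemma typedIso_iff {tp tp' : ℤ → Fin 2} :
    TypedIso tp tp' ↔ ∃ c, (∀ i, tp i = tp' (i + c)) ∨ (∀ i, tp i = tp' (c - i)) := by
  constructor
  · rintro ⟨φ, hφ⟩
    obtain ⟨c, ε, hε, hform⟩ := emb_form φ.toEmbedding
    refine ⟨c, ?_⟩
    rcases hε with h | h
    · left; intro i
      have h2 := hφ i
      have h3 : φ i = i + c := by rw [show φ i = φ.toEmbedding i from rfl, hform i, h]; ring
      rw [h3] at h2
      exact h2
    · right; intro i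
      have h2 := hφ i
      have h3 : φ i = c - i := by rw [show φ i = φ.toEmbedding i from rfl, hform i, h]; ring
      rw [h3] at h2
      exact h2
  · rintro ⟨c, h | h⟩
    · exact ⟨shiftIso c, fun i => h i⟩
    · refine ⟨negIso.trans (shiftIso c), fun i => ?_⟩
      have h2 := h i
      rw [show c - i = -i + c from by ring] at h2
      exact h2

lemma typedIso_trans {t1 t2 t3 : ℤ → Fin 2} (h1 : TypedIso t1 t2) (h2 : TypedIso t2 t3) :
    TypedIso t1 t3 := by
  obtain ⟨φ, hφ⟩ := h1
  obtain ⟨ψ, hψ⟩ := h2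
  exact ⟨φ.trans ψ, fun i => by rw [hφ i, hψ (φ i)]; rfl⟩

lemma tp0_eq_zero {i : ℤ} (h : i ≤ 0) : tp0 i = 0 := by simp only [tp0]; rw [if_pos h]
lemma tp0_eq_one {i : ℤ} (h : 0 < i) : tp0 i = 1 := by simp only [tp0]; rw [if_neg (by omega)]

lemma part1 (tp : ℤ → Fin 2) (h : {i | tp i ≠ tp0 i}.Finite) : TypedEquimorphic tp tp0 := by
  obtain ⟨a, ha⟩ := h.bddAbove
  obtain ⟨b, hb⟩ := h.bddBelow
  have hout : ∀ i : ℤ, (a < i ∨ i < b) → tp i = tp0 i := by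
    intro i hi
    by_contra hne
    have h1 := ha (show i ∈ {i | tp i ≠ tp0 i} from hne)
    have h2 := hb (show i ∈ {i | tp i ≠ tp0 i} from hne)
    omega
  set N := max (a + 1) (max (1 - b) 1) with hN
  constructor
  · rw [typedEmb_iff]
    refine ⟨N, Or.inl fun i => ?_⟩
    by_cases hi : i + N ≤ 0
    · rw [hout i (by omega), tp0_eq_zero (by omega)]
      exact fin2_zero_le _
    · rw [tp0_eq_one (by omega)]
      exact fin2_le_one _
  · rw [typedEmb_iff]
    refine ⟨N, Or.inl fun i => ?_⟩
    by_cases hi : i ≤ 0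
    · rw [tp0_eq_zero hi]
      exact fin2_zero_le _
    · rw [hout (i + N) (by omega), tp0_eq_one (i := i + N) (by omega)]
      exact fin2_le_one _

lemma normal {tp : ℤ → Fin 2} (h : TypedEquimorphic tp tp0) :
    ∃ tp' : ℤ → Fin 2, TypedIso tp tp' ∧
      ∃ a b : ℤ, (∀ i ≤ a, tp' i = 0) ∧ (∀ i, b ≤ i → tp' i = 1) := by
  obtain ⟨h1, h2⟩ := h
  rw [typedEmb_iff] at h1 h2
  obtain ⟨c, hc⟩ := h1
  obtain ⟨d, hd⟩ := h2
  have hc' : (∀ i, tp i = 1 → 0 < i + c) ∨ (∀ i, tp i = 1 → 0 < c - i) := by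
    rcases hc with h | h
    · left; intro i hi
      by_contra hle
      have h3 := h i
      rw [hi, tp0_eq_zero (by omega)] at h3
      exact absurd (fin2_one_le _ h3) (by decide)
    · right; intro i hi
      by_contra hle
      have h3 := h i
      rw [hi, tp0_eq_zero (by omega)] at h3
      exact absurd (fin2_one_le _ h3) (by decide)
  have hd' : (∀ j, d < j → tp j = 1) ∨ (∀ j, j < d → tp j = 1) := by
    rcases hd with h | h
    · left; intro j hj
      have h3 := h (j - d)
      rw [tp0_eq_one (by omega), show j - d + d = j from by ring] at h3
      exact fin2_one_le _ h3
    · right; intro j hj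
      have h3 := h (d - j)
      rw [tp0_eq_one (by omega), show d - (d - j) = j from by ring] at h3
      exact fin2_one_le _ h3
  rcases hc' with hc' | hc' <;> rcases hd' with hd' | hd'
  · refine ⟨tp, ⟨?_, -c, d + 1, ?_, ?_⟩⟩
    · rw [typedIso_iff]
      exact ⟨0, Or.inl fun i => by rw [add_zero]⟩
    · intro i hi
      refine (fin2_eq (tp i)).resolve_right fun h1 => ?_
      have := hc' i h1
      omega
    · intro i hi
      exact hd' i (by omega)
  · exfalso
    have h1 := hd' (min d (1 - c) - 1) (by omega)
    have h2 := hc' _ h1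
    omega
  · exfalso
    have h1 := hd' (max (d + 1) c) (by omega)
    have h2 := hc' _ h1
    omega
  · refine ⟨fun j => tp (-j), ⟨?_, -c, -d + 1, ?_, ?_⟩⟩
    · rw [typedIso_iff]
      refine ⟨0, Or.inr fun i => ?_⟩
      show tp i = tp (-(0 - i))
      rw [show -(0 - i) = i from by ring]
    · intro i hi
      refine (fin2_eq (tp (-i))).resolve_right fun h1 => ?_
      have := hc' (-i) h1
      omega
    · intro i hi
      exact hd' (-i) (by omega)

lemma part2 (tp : ℤ → Fin 2) (h : TypedEquimorphic tp tp0) :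
    ∃ tp' : ℤ → Fin 2, {i | tp' i ≠ tp0 i}.Finite ∧ TypedIso tp tp' := by
  obtain ⟨tp', hiso, a, b, ha, hb⟩ := normal h
  refine ⟨tp', ?_, hiso⟩
  refine Set.Finite.subset (Set.finite_Icc (min a 0) (max b 1)) ?_
  intro i hi
  simp only [Set.mem_setOf_eq] at hi
  simp only [Set.mem_Icc]
  constructor
  · by_contra h'
    push_neg at h'
    exact hi (by rw [ha i (by omega), tp0_eq_zero (by omega)])
  · by_contra h'
    push_neg at h'
    exact hi (by rw [hb i (by omega), tp0_eq_one (by omega)])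

def enc (P : ℕ → Bool) : ℕ → ℕ
  | 0 => 0
  | K + 1 => (if P K then 2 ^ K else 0) ||| enc P K

lemma enc_testBit (P : ℕ → Bool) (K j : ℕ) :
    (enc P K).testBit j = (decide (j < K) && P j) := by
  induction K with
  | zero => simp [enc]
  | succ K ih =>
    simp only [enc, Nat.testBit_or, ih]
    rcases eq_or_ne j K with rfl | hne
    · by_cases hP : P j <;> simp [hP, Nat.testBit_two_pow]
    · have e : decide (j < K) = decide (j < K + 1) := decide_eq_decide.mpr (by omega)
      by_cases hP : P K <;> simp [hP, Nat.testBit_two_pow, Ne.symm hne, e]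

def FF (n : ℕ) : ℤ → Fin 2 := fun i =>
  if 1 ≤ i ∧ (i = 1 ∨ n.testBit (i - 2).toNat = false) then 1 else 0

lemma FF_nonpos (n : ℕ) {i : ℤ} (h : i ≤ 0) : FF n i = 0 := by
  simp only [FF]
  rw [if_neg]
  rintro ⟨h1, -⟩
  omega

lemma FF_one (n : ℕ) : FF n 1 = 1 := by
  simp only [FF]
  norm_num

lemma FF_ge_two (n : ℕ) {i : ℤ} (h : 2 ≤ i) :
    FF n i = if n.testBit (i - 2).toNat = false then 1 else 0 := by
  by_cases ht : n.testBit (i - 2).toNat = false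
  · rw [if_pos ht]
    simp only [FF]
    rw [if_pos ⟨by omega, Or.inr ht⟩]
  · rw [if_neg ht]
    simp only [FF]
    rw [if_neg]
    rintro ⟨-, h2 | h2⟩
    · omega
    · exact ht h2

lemma FF_large (n : ℕ) {i : ℤ} (h : (n : ℤ) + 2 ≤ i) : FF n i = 1 := by
  rw [FF_ge_two n (by omega), if_pos]
  apply Nat.testBit_lt_two_pow
  calc n < 2 ^ n := Nat.lt_two_pow_self (n := n)
    _ ≤ 2 ^ (i - 2).toNat := Nat.pow_le_pow_right (by norm_num) (by omega)

lemma FF_eq_one_pos (n : ℕ) {i : ℤ} (h : FF n i = 1) : 1 ≤ i := by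
  by_contra h'
  rw [FF_nonpos n (by omega)] at h
  exact absurd h (by decide)

lemma FF_finite (n : ℕ) : {i | FF n i ≠ tp0 i}.Finite := by
  refine Set.Finite.subset (Set.finite_Icc 0 ((n : ℤ) + 2)) ?_
  intro i hi
  simp only [Set.mem_setOf_eq] at hi
  simp only [Set.mem_Icc]
  constructor
  · by_contra h'
    exact hi (by rw [FF_nonpos n (by omega), tp0_eq_zero (by omega)])
  · by_contra h'
    exact hi (by rw [FF_large n (by omega), tp0_eq_one (by omega)])

lemma FF_inj {m n : ℕ} (h : TypedIso (FF m) (FF n)) : m = n := by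
  rw [typedIso_iff] at h
  obtain ⟨c, h | h⟩ := h
  · have hc1 : 0 ≤ c := by
      have e1 := h 1
      rw [FF_one] at e1
      have := FF_eq_one_pos n e1.symm
      omega
    have hc2 : c ≤ 0 := by
      have e2 := h (1 - c)
      rw [show 1 - c + c = 1 from by ring, FF_one] at e2
      have := FF_eq_one_pos m e2
      omega
    have hc : c = 0 := le_antisymm hc2 hc1
    subst hc
    apply Nat.eq_of_testBit_eq
    intro k
    have hk := h ((k : ℤ) + 2)
    rw [add_zero, FF_ge_two m (by omega), FF_ge_two n (by omega),
        show ((k : ℤ) + 2 - 2) = (k : ℤ) from by ring, Int.toNat_natCast] at hk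
    by_cases hm : m.testBit k = false <;> by_cases hn : n.testBit k = false
    · rw [hm, hn]
    · rw [if_pos hm, if_neg hn] at hk
      exact absurd hk (by decide)
    · rw [if_neg hm, if_pos hn] at hk
      exact absurd hk (by decide)
    · rw [Bool.not_eq_false] at hm hn
      rw [hm, hn]
  · exfalso
    have hi := h (min 0 (c - (n : ℤ) - 2))
    rw [FF_nonpos m (min_le_left 0 _)] at hi
    rw [FF_large n (by have := min_le_right 0 (c - (n : ℤ) - 2); omega)] at hi
    exact absurd hi (by decide)

lemma FF_complete (tp : ℤ → Fin 2) (h : TypedEquimorphic tp tp0) : ∃ n, TypedIso tp (FF n) := by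
  obtain ⟨tp', hiso, a, b, ha, hb⟩ := normal h
  -- least element of {i | tp' i = 1}
  obtain ⟨mm, hm1, hm2⟩ := Int.exists_least_of_bdd
    (P := fun i => tp' i = 1)
    ⟨a + 1, fun z hz => by by_contra h'; have hz' : tp' z = 1 := hz; rw [ha z (by omega)] at hz'; exact absurd hz' (by decide)⟩
    ⟨max b 0, hb _ (le_max_left b 0)⟩
  set tp'' : ℤ → Fin 2 := fun j => tp' (j + (mm - 1)) with htp''
  have h0 : ∀ j ≤ 0, tp'' j = 0 := by
    intro j hj
    refine (fin2_eq (tp' (j + (mm - 1)))).resolve_right fun h1 => ?_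
    have := hm2 _ h1
    omega
  have h1 : tp'' 1 = 1 := by
    show tp' (1 + (mm - 1)) = 1
    rw [show 1 + (mm - 1) = mm from by ring]
    exact hm1
  have hbig : ∀ j, b - mm + 1 ≤ j → tp'' j = 1 := by
    intro j hj
    exact hb _ (by omega)
  have hiso2 : TypedIso tp' tp'' := by
    rw [typedIso_iff]
    refine ⟨1 - mm, Or.inl fun i => ?_⟩
    show tp' i = tp' (i + (1 - mm) + (mm - 1))
    rw [show i + (1 - mm) + (mm - 1) = i from by ring]
  set K : ℕ := (b - mm - 1).toNat with hK
  set n : ℕ := enc (fun k => decide (tp'' ((k : ℤ) + 2) = 0)) K with hn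
  have hKbig : ∀ k : ℕ, K ≤ k → tp'' ((k : ℤ) + 2) = 1 := by
    intro k hk
    apply hbig
    have := Int.self_le_toNat (b - mm - 1)
    omega
  have heq : ∀ i, tp'' i = FF n i := by
    intro i
    rcases lt_trichotomy i 1 with hi | hi | hi
    · rw [h0 i (by omega), FF_nonpos n (by omega)]
    · subst hi; rw [h1, FF_one]
    · -- i ≥ 2
      have h2i : 2 ≤ i := by omega
      set k : ℕ := (i - 2).toNat with hk
      have hik : i = (k : ℤ) + 2 := by omega
      rw [FF_ge_two n h2i, ← hk, hn, enc_testBit]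
      by_cases hlt : k < K
      · by_cases hz : tp'' ((k : ℤ) + 2) = 0
        · rw [if_neg (by simp [hlt, hz])]
          rw [hik]; exact hz
        · rw [if_pos (by simp [hlt, hz])]
          rw [hik]
          exact (fin2_eq _).resolve_left hz
      · rw [if_pos (by simp [hlt])]
        rw [hik]
        exact hKbig k (by omega)
  refine ⟨n, typedIso_trans (typedIso_trans hiso hiso2) ?_⟩
  rw [typedIso_iff]
  exact ⟨0, Or.inl fun i => by rw [add_zero, heq]⟩

end Aux

/-- Every type assignment differing from `tp₀` on only finitely many integers makes a
typed double ray equimorphic with `D_{tp₀}`; conversely every typed double ray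
equimorphic with `D_{tp₀}` is isomorphic to `D_{tp'}` for some `tp'` differing from
`tp₀` on only finitely many integers; and the number of isomorphism classes of typed
double rays equimorphic with `D_{tp₀}` is exactly `ℵ₀`. -/
theorem siblings_of_typed_double_ray :
    (∀ tp : ℤ → Fin 2, {i | tp i ≠ tp0 i}.Finite → TypedEquimorphic tp tp0) ∧
    (∀ tp : ℤ → Fin 2, TypedEquimorphic tp tp0 →
      ∃ tp' : ℤ → Fin 2, {i | tp' i ≠ tp0 i}.Finite ∧ TypedIso tp tp') ∧
    (∃ F : ℕ → (ℤ → Fin 2),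
      (∀ n, TypedEquimorphic (F n) tp0) ∧
      (∀ m n, m ≠ n → ¬ TypedIso (F m) (F n)) ∧
      (∀ tp : ℤ → Fin 2, TypedEquimorphic tp tp0 → ∃ n, TypedIso tp (F n))) := by
  refine ⟨part1, part2, FF, fun n => part1 _ (FF_finite n),
    fun m n hmn h => hmn (FF_inj h), FF_complete⟩
end

section
/- For natural numbers n, n' ≥ 1 and m, m' ≥ 2, there exists a rooted-tree embedding of PK(2n, m) into PK(2n', m') if and only if n = n' and m ≤ m'. In particular, for distinct ℓ ≠ ℓ' the gadgets PK(2ℓ+6, 2) and PK(2ℓ'+6, 2) do not embed into each other as rooted trees. -/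
open SimpleGraph

/-- The vertex type of the gadget `PK n m`: a path `p₀, …, p_n`, an extra vertex `u`,
and `m` further leaves. -/
def PKV (n m : ℕ) : Type := Fin (n + 1) ⊕ (Unit ⊕ Fin m)

/-- The finite rooted tree `PK n m`: a path `p₀, p₁, …, p_n` of length `n`, a vertex `u`
adjacent to `p_n`, and `m` further leaves each adjacent to `u`.  Its root is `p₀`. -/
def PK (n m : ℕ) : SimpleGraph (PKV n m) :=
  SimpleGraph.fromRel (fun x y =>
    match x, y with
    | Sum.inl i, Sum.inl j => (i : ℕ) + 1 = (j : ℕ)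
    | Sum.inl i, Sum.inr (Sum.inl _) => (i : ℕ) = n
    | Sum.inr (Sum.inl _), Sum.inr (Sum.inr _) => True
    | _, _ => False)

/-- The root `p₀` of `PK n m`. -/
def pkRoot (n m : ℕ) : PKV n m := Sum.inl 0

/-- There is a rooted-tree embedding of `PK n m` into `PK n' m'`:
a graph embedding mapping root to root. -/
def RootedEmb (n m n' m' : ℕ) : Prop :=
  ∃ f : PK n m ↪g PK n' m', f (pkRoot n m) = pkRoot n' m'

section PKAux
variable {n m : ℕ}

lemma adj_inl_inl {i j : Fin (n+1)} :
    (PK n m).Adj (Sum.inl i) (Sum.inl j) ↔ ((i:ℕ)+1 = j ∨ (j:ℕ)+1 = i) := by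
  simp only [PK, fromRel_adj]
  constructor
  · rintro ⟨-, h⟩; exact h
  · intro h
    refine ⟨?_, h⟩
    intro he
    obtain rfl : i = j := Sum.inl_injective he
    omega

lemma adj_inl_u {i : Fin (n+1)} {u : Unit} :
    (PK n m).Adj (Sum.inl i) (Sum.inr (Sum.inl u)) ↔ (i:ℕ) = n := by
  simp only [PK, fromRel_adj]
  constructor
  · rintro ⟨-, h | h⟩ <;> simp_all
  · intro h; exact ⟨Sum.inl_ne_inr, Or.inl h⟩

lemma adj_u_inl {i : Fin (n+1)} {u : Unit} :
    (PK n m).Adj (Sum.inr (Sum.inl u)) (Sum.inl i) ↔ (i:ℕ) = n := by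
  exact ⟨fun h => adj_inl_u.mp h.symm, fun h => (adj_inl_u.mpr h).symm⟩

lemma adj_inl_leaf {i : Fin (n+1)} {k : Fin m} :
    ¬ (PK n m).Adj (Sum.inl i) (Sum.inr (Sum.inr k)) := by
  rintro ⟨-, h | h⟩ <;> exact h

lemma adj_leaf_inl {i : Fin (n+1)} {k : Fin m} :
    ¬ (PK n m).Adj (Sum.inr (Sum.inr k)) (Sum.inl i) := by
  exact fun h => adj_inl_leaf h.symm

lemma adj_u_leaf {u : Unit} {k : Fin m} :
    (PK n m).Adj (Sum.inr (Sum.inl u)) (Sum.inr (Sum.inr k)) := by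
  simp only [PK, fromRel_adj]
  exact ⟨fun h => Sum.inl_ne_inr (Sum.inr_injective h), Or.inl trivial⟩

lemma adj_u_u {u v : Unit} :
    ¬ (PK n m).Adj (Sum.inr (Sum.inl u)) (Sum.inr (Sum.inl v)) := by
  rintro ⟨-, h | h⟩ <;> exact h

lemma adj_leaf_leaf {k l : Fin m} :
    ¬ (PK n m).Adj (Sum.inr (Sum.inr k)) (Sum.inr (Sum.inr l)) := by
  rintro ⟨-, h | h⟩ <;> exact h

lemma adj_leaf_u {u : Unit} {k : Fin m} :
    (PK n m).Adj (Sum.inr (Sum.inr k)) (Sum.inr (Sum.inl u)) := by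
  exact adj_u_leaf.symm

lemma path_fixed {a b m m' : ℕ} (f : PK a m ↪g PK b m')
    (hf : f (Sum.inl 0) = Sum.inl 0) :
    ∀ i (hia : i ≤ a) (hib : i ≤ b),
      f (Sum.inl ⟨i, by omega⟩) = Sum.inl ⟨i, by omega⟩ := by
  intro i
  induction i using Nat.strong_induction_on with
  | _ i ih =>
    match i with
    | 0 => intro _ _; simpa [Fin.ext_iff] using hf
    | (i+1) =>
      intro hia hib
      have hprev : f (Sum.inl ⟨i, by omega⟩) = Sum.inl ⟨i, by omega⟩ :=
        ih i (by omega) (by omega) (by omega)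
      have hadj : (PK a m).Adj (Sum.inl ⟨i, by omega⟩) (Sum.inl ⟨i+1, by omega⟩) :=
        adj_inl_inl.mpr (Or.inl rfl)
      have hadj' := f.map_adj_iff.mpr hadj
      rw [hprev] at hadj'
      rcases hy : f (Sum.inl ⟨i+1, by omega⟩) with j | u | k
      · rw [hy] at hadj'
        rcases adj_inl_inl.mp hadj' with h | h
        · simp only [Fin.val_mk] at h
          congr 1
          exact Fin.ext (by simp only [Fin.val_mk]; omega)
        · -- j + 1 = i, so j = i - 1, contradicting injectivity
          exfalso
          simp only [Fin.val_mk] at h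
          have hi1 : 1 ≤ i := by omega
          have hpp : f (Sum.inl ⟨i-1, by omega⟩) = Sum.inl ⟨i-1, by omega⟩ :=
            ih (i-1) (by omega) (by omega) (by omega)
          have hjj : (Sum.inl j : PKV b m') = Sum.inl (⟨i-1, by omega⟩ : Fin (b+1)) := by
            congr 1; exact Fin.ext (by simp only [Fin.val_mk]; omega)
          rw [hjj, ← hpp] at hy
          have h2 := Sum.inl_injective (f.injective hy)
          rw [Fin.ext_iff] at h2
          simp only [Fin.val_mk] at h2
          omega
      · rw [hy] at hadj'
        have h2 := adj_inl_u.mp hadj'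
        simp only [Fin.val_mk] at h2
        omega
      · rw [hy] at hadj'
        exact absurd hadj' adj_inl_leaf

lemma backward (n m m' : ℕ) (h : m ≤ m') :
    ∃ f : PK n m ↪g PK n m', f (Sum.inl 0) = Sum.inl 0 := by
  refine ⟨⟨⟨Sum.map id (Sum.map id (Fin.castLE h)), ?_⟩, ?_⟩, rfl⟩
  · exact Function.Injective.sumMap Function.injective_id
      (Function.Injective.sumMap Function.injective_id (Fin.castLE_injective h))
  · intro a b
    change (PK n m').Adj (Sum.map id (Sum.map id (Fin.castLE h)) a)
      (Sum.map id (Sum.map id (Fin.castLE h)) b) ↔ (PK n m).Adj a b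
    rcases a with i | u | k <;> rcases b with j | v | l <;>
      simp [Function.Embedding.coeFn_mk, Sum.map_inl, Sum.map_inr, id_eq, adj_inl_inl, adj_inl_u, adj_u_inl,
        adj_inl_leaf, adj_leaf_inl, adj_u_leaf, adj_u_u, adj_leaf_leaf, adj_leaf_u,
        Fin.coe_castLE]

lemma forward {n n' m m' : ℕ} (hn : 1 ≤ n) (hn' : 1 ≤ n') (hm : 2 ≤ m) (hm' : 2 ≤ m')
    (f : PK (2*n) m ↪g PK (2*n') m') (hf : f (Sum.inl 0) = Sum.inl 0) :
    n = n' ∧ m ≤ m' := by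
  have P := path_fixed f hf
  rcases lt_trichotomy n n' with hlt | heq | hgt
  · -- n < n' : impossible
    exfalso
    have h2n : f (Sum.inl ⟨2*n, by omega⟩) = Sum.inl ⟨2*n, by omega⟩ :=
      P (2*n) le_rfl (by omega)
    have hU := f.map_adj_iff.mpr
      (adj_inl_u.mpr rfl :
        (PK (2*n) m).Adj (Sum.inl ⟨2*n, by omega⟩) (Sum.inr (Sum.inl ())))
    rw [h2n] at hU
    have hfu : f (Sum.inr (Sum.inl ())) = Sum.inl ⟨2*n+1, by omega⟩ := by
      rcases hy : f (Sum.inr (Sum.inl ())) with j | u | k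
      · rw [hy] at hU
        rcases adj_inl_inl.mp hU with h | h
        · congr 1
          exact Fin.ext (by simp only [Fin.val_mk] at h ⊢; omega)
        · exfalso
          simp only [Fin.val_mk] at h
          have hpp := P (2*n-1) (by omega) (by omega)
          have hjj : (Sum.inl j : PKV (2*n') m')
              = Sum.inl (⟨2*n-1, by omega⟩ : Fin (2*n'+1)) := by
            congr 1; exact Fin.ext (by simp only [Fin.val_mk]; omega)
          rw [hjj, ← hpp] at hy
          exact absurd (f.injective hy).symm Sum.inl_ne_inr
      · exfalso
        rw [hy] at hU
        have h2 := adj_inl_u.mp hU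
        simp only [Fin.val_mk] at h2
        omega
      · exfalso; rw [hy] at hU; exact absurd hU adj_inl_leaf
    have key : ∀ k : Fin m, f (Sum.inr (Sum.inr k)) = Sum.inl ⟨2*n+2, by omega⟩ := by
      intro k
      have hadjL := f.map_adj_iff.mpr
        (adj_u_leaf : (PK (2*n) m).Adj (Sum.inr (Sum.inl ())) (Sum.inr (Sum.inr k)))
      rw [hfu] at hadjL
      rcases hy : f (Sum.inr (Sum.inr k)) with j | u | l
      · rw [hy] at hadjL
        rcases adj_inl_inl.mp hadjL with h | h
        · congr 1
          exact Fin.ext (by simp only [Fin.val_mk] at h ⊢; omega)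
        · exfalso
          simp only [Fin.val_mk] at h
          have hpp := P (2*n) le_rfl (by omega)
          have hjj : (Sum.inl j : PKV (2*n') m')
              = Sum.inl (⟨2*n, by omega⟩ : Fin (2*n'+1)) := by
            congr 1; exact Fin.ext (by simp only [Fin.val_mk]; omega)
          rw [hjj, ← hpp] at hy
          exact absurd (f.injective hy).symm Sum.inl_ne_inr
      · exfalso
        rw [hy] at hadjL
        have h2 := adj_inl_u.mp hadjL
        simp only [Fin.val_mk] at h2
        omega
      · exfalso; rw [hy] at hadjL; exact absurd hadjL adj_inl_leaf
    have h01 := f.injective ((key ⟨0, by omega⟩).trans (key ⟨1, by omega⟩).symm)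
    have h02 := Sum.inr_injective (Sum.inr_injective h01)
    rw [Fin.ext_iff] at h02
    simp only [Fin.val_mk] at h02
    omega
  · -- n = n'
    subst heq
    refine ⟨rfl, ?_⟩
    have h2n : f (Sum.inl ⟨2*n, by omega⟩) = Sum.inl ⟨2*n, by omega⟩ :=
      P (2*n) le_rfl le_rfl
    have hU := f.map_adj_iff.mpr
      (adj_inl_u.mpr rfl :
        (PK (2*n) m).Adj (Sum.inl ⟨2*n, by omega⟩) (Sum.inr (Sum.inl ())))
    rw [h2n] at hU
    have hfu : f (Sum.inr (Sum.inl ())) = Sum.inr (Sum.inl ()) := by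
      rcases hy : f (Sum.inr (Sum.inl ())) with j | u | k
      · exfalso
        rw [hy] at hU
        rcases adj_inl_inl.mp hU with h | h
        · have hj := j.isLt; simp only [Fin.val_mk] at h; omega
        · simp only [Fin.val_mk] at h
          have hpp := P (2*n-1) (by omega) (by omega)
          have hjj : (Sum.inl j : PKV (2*n) m')
              = Sum.inl (⟨2*n-1, by omega⟩ : Fin (2*n+1)) := by
            congr 1; exact Fin.ext (by simp only [Fin.val_mk]; omega)
          rw [hjj, ← hpp] at hy
          exact absurd (f.injective hy).symm Sum.inl_ne_inr
      · cases u; rfl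
      · exfalso; rw [hy] at hU; exact absurd hU adj_inl_leaf
    have key : ∀ k : Fin m, ∃ l : Fin m',
        f (Sum.inr (Sum.inr k)) = Sum.inr (Sum.inr l) := by
      intro k
      have hadjL := f.map_adj_iff.mpr
        (adj_u_leaf : (PK (2*n) m).Adj (Sum.inr (Sum.inl ())) (Sum.inr (Sum.inr k)))
      rw [hfu] at hadjL
      rcases hy : f (Sum.inr (Sum.inr k)) with j | u | l
      · exfalso
        rw [hy] at hadjL
        have hj := adj_u_inl.mp hadjL
        have hjj : (Sum.inl j : PKV (2*n) m')
            = Sum.inl (⟨2*n, by omega⟩ : Fin (2*n+1)) := by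
          congr 1; exact Fin.ext (by simp only [Fin.val_mk]; omega)
        rw [hjj, ← h2n] at hy
        exact absurd (f.injective hy).symm Sum.inl_ne_inr
      · exfalso; rw [hy] at hadjL; exact absurd hadjL adj_u_u
      · exact ⟨l, rfl⟩
    choose g hg using key
    have hginj : Function.Injective g := by
      intro k1 k2 hgk
      have hfe : f (Sum.inr (Sum.inr k1)) = f (Sum.inr (Sum.inr k2)) := by
        rw [hg k1, hg k2, hgk]
      exact Sum.inr_injective (Sum.inr_injective (f.injective hfe))
    simpa using Fintype.card_le_of_injective g hginj
  · -- n' < n : impossible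
    exfalso
    have h2n' : f (Sum.inl ⟨2*n', by omega⟩) = Sum.inl ⟨2*n', by omega⟩ :=
      P (2*n') (by omega) le_rfl
    have hadj1 := f.map_adj_iff.mpr
      (adj_inl_inl.mpr (Or.inl rfl) :
        (PK (2*n) m).Adj (Sum.inl ⟨2*n', by omega⟩) (Sum.inl ⟨2*n'+1, by omega⟩))
    rw [h2n'] at hadj1
    have hq1 : f (Sum.inl ⟨2*n'+1, by omega⟩) = Sum.inr (Sum.inl ()) := by
      rcases hy : f (Sum.inl ⟨2*n'+1, by omega⟩) with j | u | k
      · exfalso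
        rw [hy] at hadj1
        rcases adj_inl_inl.mp hadj1 with h | h
        · have hj := j.isLt; simp only [Fin.val_mk] at h; omega
        · simp only [Fin.val_mk] at h
          have hpp := P (2*n'-1) (by omega) (by omega)
          have hjj : (Sum.inl j : PKV (2*n') m')
              = Sum.inl (⟨2*n'-1, by omega⟩ : Fin (2*n'+1)) := by
            congr 1; exact Fin.ext (by simp only [Fin.val_mk]; omega)
          rw [hjj, ← hpp] at hy
          have h2 := Sum.inl_injective (f.injective hy)
          rw [Fin.ext_iff] at h2
          simp only [Fin.val_mk] at h2
          omega
      · cases u; rfl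
      · exfalso; rw [hy] at hadj1; exact absurd hadj1 adj_inl_leaf
    have hadj2 := f.map_adj_iff.mpr
      (adj_inl_inl.mpr (Or.inl rfl) :
        (PK (2*n) m).Adj (Sum.inl ⟨2*n'+1, by omega⟩) (Sum.inl ⟨2*n'+2, by omega⟩))
    rw [hq1] at hadj2
    obtain ⟨k0, hq2⟩ : ∃ k0 : Fin m',
        f (Sum.inl ⟨2*n'+2, by omega⟩) = Sum.inr (Sum.inr k0) := by
      rcases hy : f (Sum.inl ⟨2*n'+2, by omega⟩) with j | u | k
      · exfalso
        rw [hy] at hadj2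
        have hj := adj_u_inl.mp hadj2
        have hjj : (Sum.inl j : PKV (2*n') m')
            = Sum.inl (⟨2*n', by omega⟩ : Fin (2*n'+1)) := by
          congr 1; exact Fin.ext (by simp only [Fin.val_mk]; omega)
        rw [hjj, ← h2n'] at hy
        have h2 := Sum.inl_injective (f.injective hy)
        rw [Fin.ext_iff] at h2
        simp only [Fin.val_mk] at h2
        omega
      · exfalso; rw [hy] at hadj2; exact absurd hadj2 adj_u_u
      · exact ⟨k, rfl⟩
    have step : ∀ x : PKV (2*n) m,
        (PK (2*n) m).Adj (Sum.inl ⟨2*n'+2, by omega⟩) x →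
        x = Sum.inl ⟨2*n'+1, by omega⟩ := by
      intro x hx
      have hx' := f.map_adj_iff.mpr hx
      rw [hq2] at hx'
      rcases hy : f x with j | u | l
      · exfalso; rw [hy] at hx'; exact absurd hx' adj_leaf_inl
      · cases u
        rw [← hq1] at hy
        exact f.injective hy
      · exfalso; rw [hy] at hx'; exact absurd hx' adj_leaf_leaf
    by_cases hcase : 2*n'+2 = 2*n
    · have hadjU : (PK (2*n) m).Adj (Sum.inl ⟨2*n'+2, by omega⟩) (Sum.inr (Sum.inl ())) :=
        adj_inl_u.mpr (by simp only [Fin.val_mk]; omega)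
      exact absurd ((step _ hadjU).symm) Sum.inl_ne_inr
    · have hadjN : (PK (2*n) m).Adj (Sum.inl ⟨2*n'+2, by omega⟩)
          (Sum.inl ⟨2*n'+3, by omega⟩) :=
        adj_inl_inl.mpr (Or.inl rfl)
      have h2 := Sum.inl_injective (step _ hadjN)
      rw [Fin.ext_iff] at h2
      simp only [Fin.val_mk] at h2
      omega

end PKAux

/-- For `n, n' ≥ 1` and `m, m' ≥ 2`, the gadget `PK (2n) m` embeds into `PK (2n') m'`
as rooted trees if and only if `n = n'` and `m ≤ m'`.  In particular, for `ℓ ≠ ℓ'`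
the gadgets `PK (2ℓ+6) 2` and `PK (2ℓ'+6) 2` do not embed into each other as rooted
trees. -/

theorem PK_rooted_embedding_iff :
    (∀ n n' m m' : ℕ, 1 ≤ n → 1 ≤ n' → 2 ≤ m → 2 ≤ m' →
      (RootedEmb (2 * n) m (2 * n') m' ↔ n = n' ∧ m ≤ m')) ∧
    (∀ ℓ ℓ' : ℕ, ℓ ≠ ℓ' → ¬ RootedEmb (2 * ℓ + 6) 2 (2 * ℓ' + 6) 2) := by
  have main : ∀ n n' m m' : ℕ, 1 ≤ n → 1 ≤ n' → 2 ≤ m → 2 ≤ m' →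
      (RootedEmb (2 * n) m (2 * n') m' ↔ n = n' ∧ m ≤ m') := by
    intro n n' m m' hn hn' hm hm'
    constructor
    · rintro ⟨f, hf⟩
      exact forward hn hn' hm hm' f hf
    · rintro ⟨rfl, hmm⟩
      exact backward (2 * n) m m' hmm
  refine ⟨main, ?_⟩
  intro ℓ ℓ' hne hemb
  have h1 : 2 * ℓ + 6 = 2 * (ℓ + 3) := by ring
  have h2 : 2 * ℓ' + 6 = 2 * (ℓ' + 3) := by ring
  rw [h1, h2] at hemb
  have := (main (ℓ + 3) (ℓ' + 3) 2 2 (by omega) (by omega) le_rfl le_rfl).mp hemb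
  omega
end

section
/- The ray, considered as a graph, has infinitely many pairwise non-isomorphic siblings (for instance, the disjoint unions of the ray with finite paths of distinct lengths are pairwise non-isomorphic and each is equimorphic with the ray); nevertheless, every tree equimorphic with the ray is isomorphic to the ray. -/
open SimpleGraph

/-- The one-way infinite ray: the graph on `ℕ` with edges `{n, n+1}`. -/
def ray : SimpleGraph ℕ where
  Adj m n := m + 1 = n ∨ n + 1 = m
  symm := ⟨by intro a b h; tauto⟩
  loopless := ⟨by intro a h; omega⟩

/-- The finite path of length `n`: the graph on `{0, 1, …, n}` with edges `{i, i+1}`. -/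
def finPath (n : ℕ) : SimpleGraph (Fin (n + 1)) where
  Adj i j := (i : ℕ) + 1 = (j : ℕ) ∨ (j : ℕ) + 1 = (i : ℕ)
  symm := ⟨by intro a b h; tauto⟩
  loopless := ⟨by intro a h; omega⟩

/-- The disjoint union of the ray with a finite path of length `n`. -/
def rayPlusPath (n : ℕ) : SimpleGraph (ℕ ⊕ Fin (n + 1)) :=
  ray ⊕g finPath n

-- Part 1: embedding rayPlusPath n into ray
def embBack (n : ℕ) : rayPlusPath n ↪g ray where
  toFun := Sum.elim (fun k => k + n + 2) (fun i => (i : ℕ))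
  inj' := by
    rintro (a | a) (b | b) h <;> simp only [Sum.elim_inl, Sum.elim_inr] at h
    · exact congrArg _ (by omega : a = b)
    · exact absurd h (by have := b.isLt; omega)
    · exact absurd h (by have := a.isLt; omega)
    · exact congrArg _ (Fin.ext h)
  map_rel_iff' := by
    intro a b
    change ray.Adj (Sum.elim (fun k : ℕ => k + n + 2) (fun i : Fin (n + 1) => (i : ℕ)) a)
      (Sum.elim (fun k : ℕ => k + n + 2) (fun i : Fin (n + 1) => (i : ℕ)) b) ↔ _
    revert a b
    rintro (a | a) (b | b) <;>
      simp only [Function.Embedding.coeFn_mk, Sum.elim_inl, Sum.elim_inr, rayPlusPath,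
        ray, sum_adj, finPath] <;>
      try omega
    · constructor
      · intro h; exact absurd h (by have := b.isLt; omega)
      · intro h; exact h.elim
    · constructor
      · intro h; exact absurd h (by have := a.isLt; omega)
      · intro h; exact h.elim
-- helpers for part 2
lemma walk_isLeft {α β : Type*} {G : SimpleGraph α} {H : SimpleGraph β} :
    ∀ {u v : α ⊕ β} (_ : (G ⊕g H).Walk u v), u.isLeft = v.isLeft := by
  intro u v w
  induction w with
  | nil => rfl
  | cons h p ih =>
    rename_i a b c
    have : a.isLeft = b.isLeft := by
      cases a <;> cases b <;> simp_all [sum_adj]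
    rw [this]; exact ih

lemma finPath_connected (n : ℕ) : (finPath n).Connected := by
  rw [connected_iff]
  refine ⟨?_, ⟨0⟩⟩
  have key : ∀ j : ℕ, ∀ h : j < n + 1, (finPath n).Reachable 0 ⟨j, h⟩ := by
    intro j
    induction j with
    | zero => intro h; rfl
    | succ k ih =>
      intro h
      have hk : k < n + 1 := by omega
      refine (ih hk).trans (Adj.reachable ?_)
      simp [finPath]
    -- done
  intro i j
  have hi := key i.val i.isLt
  have hj := key j.val j.isLt
  exact hi.symm.trans hj

lemma ray_reachable (k l : ℕ) : ray.Reachable k l := by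
  have key : ∀ j : ℕ, ray.Reachable 0 j := by
    intro j
    induction j with
    | zero => rfl
    | succ k ih => exact ih.trans (Adj.reachable (by simp [ray]))
  exact (key k).symm.trans (key l)

lemma reach_inr (n : ℕ) (i : Fin (n + 1)) :
    {w | (rayPlusPath n).Reachable (Sum.inr i) w} = Set.range Sum.inr := by
  ext w
  constructor
  · rintro ⟨p⟩
    have := walk_isLeft p
    cases w with
    | inl a => simp at this
    | inr a => exact ⟨a, rfl⟩
  · rintro ⟨a, rfl⟩
    exact Reachable.map (Embedding.sumInr (G := ray)).toHom
      ((finPath_connected n).preconnected i a)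

noncomputable def iso_reach_equiv {α β : Type*} {G : SimpleGraph α} {H : SimpleGraph β}
    (φ : G ≃g H) (v : α) :
    {w | G.Reachable v w} ≃ {w | H.Reachable (φ v) w} := by
  refine Equiv.subtypeEquiv φ.toEquiv (fun w => ?_)
  constructor
  · intro h; exact h.map φ.toHom
  · intro h
    have := h.map φ.symm.toHom
    simpa using this

lemma part2_s17 (m n : ℕ) (h : m ≠ n) : ¬ Nonempty (rayPlusPath m ≃g rayPlusPath n) := by
  rintro ⟨φ⟩
  have e := iso_reach_equiv φ (Sum.inr 0)
  rw [reach_inr] at e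
  rcases hv : φ (Sum.inr 0) with k | j
  · rw [hv, ] at e
    have hfin : (Set.range (Sum.inr : Fin (m+1) → ℕ ⊕ Fin (m+1))).Finite :=
      Set.finite_range _
    have hinf : {w | (rayPlusPath n).Reachable (Sum.inl k) w}.Infinite := by
      apply Set.infinite_of_injective_forall_mem (f := fun j : ℕ => (Sum.inl j : ℕ ⊕ Fin (n+1)))
      case hi => exact fun a b hab => by simpa using hab
      intro a
      exact Reachable.map (Embedding.sumInl (H := finPath n)).toHom (ray_reachable k a)
    have := hfin.to_subtype
    have hF : Finite ↥{w | (rayPlusPath n).Reachable (Sum.inl k) w} := Finite.of_equiv _ e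
    exact hinf (Set.toFinite _)
  · rw [hv, reach_inr] at e
    have e1 : Fin (m+1) ≃ Fin (n+1) :=
      (Equiv.ofInjective _ Sum.inr_injective).trans
        (e.trans (Equiv.ofInjective _ Sum.inr_injective).symm)
    have := Fin.equiv_iff_eq.mp ⟨e1⟩
    omega
-- Part 3
lemma iv_lemma {β : Type} {T : SimpleGraph β} (f : T ↪g ray) :
    ∀ {u v : β} (_ : T.Walk u v) (c : ℕ), f u ≤ c → c ≤ f v → ∃ x, f x = c := by
  intro u v w
  induction w with
  | nil => exact fun c h1 h2 => ⟨_, le_antisymm h1 h2⟩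
  | cons h p ih =>
    rename_i a b d
    intro c h1 h2
    have hadj : ray.Adj (f a) (f b) := f.map_rel_iff.mpr h
    have : f a + 1 = f b ∨ f b + 1 = f a := hadj
    rcases this with hb | hb
    · rcases Nat.eq_or_lt_of_le h1 with rfl | hlt
      · exact ⟨a, rfl⟩
      · exact ih c (by omega) h2
    · exact ih c (by omega) h2

lemma part3 (β : Type) (T : SimpleGraph β) (hT : T.IsTree) (hE : Equimorphic ray T) :
    Nonempty (T ≃g ray) := by
  obtain ⟨⟨g⟩, ⟨f⟩⟩ := hE
  have hconn : T.Connected := hT.isConnected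
  -- the range of f
  have hne : (Set.range (⇑f)).Nonempty := ⟨f (g 0), Set.mem_range_self _⟩
  set m := sInf (Set.range (⇑f)) with hm
  have hmem : m ∈ Set.range (⇑f) := Nat.sInf_mem hne
  have hge : ∀ v : β, m ≤ f v := fun v => Nat.sInf_le (Set.mem_range_self v)
  -- range f is infinite
  have hinfβ : Infinite β := Infinite.of_injective (⇑g) g.injective
  have hinf : (Set.range (⇑f)).Infinite := Set.infinite_range_of_injective f.injective
  -- range f is upward closed from m
  have hup : ∀ c : ℕ, m ≤ c → c ∈ Set.range (⇑f) := by
    intro c hc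
    obtain ⟨u, hu⟩ := hmem
    obtain ⟨b, hb, hcb⟩ := hinf.exists_gt c
    obtain ⟨v, hv⟩ := hb
    obtain ⟨w⟩ := hconn.preconnected u v
    obtain ⟨x, hx⟩ := iv_lemma f w c (by omega) (by omega)
    exact ⟨x, hx⟩
  -- the bijection v ↦ f v - m
  have hbij : Function.Bijective (fun v => f v - m) := by
    constructor
    · intro a b hab
      simp only at hab
      have := hge a; have := hge b
      exact f.injective (by omega)
    · intro c
      obtain ⟨v, hv⟩ := hup (m + c) (by omega)
      exact ⟨v, by simp [hv]⟩
  refine ⟨⟨Equiv.ofBijective _ hbij, ?_⟩⟩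
  intro a b
  simp only [Equiv.ofBijective_apply]
  have ha := hge a; have hb := hge b
  constructor
  · intro h
    have : ray.Adj (f a) (f b) := by
      show f a + 1 = f b ∨ f b + 1 = f a
      rcases (h : (f a - m) + 1 = (f b - m) ∨ (f b - m) + 1 = (f a - m)) with h' | h' <;> omega
    exact f.map_rel_iff.mp this
  · intro h
    have : ray.Adj (f a) (f b) := f.map_rel_iff.mpr h
    rcases (this : f a + 1 = f b ∨ f b + 1 = f a) with h' | h' <;>
      [left; right] <;> omega

/-- The ray has infinitely many pairwise non-isomorphic siblings: the disjoint unions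
of the ray with finite paths of distinct lengths are pairwise non-isomorphic and each
is equimorphic with the ray.  Nevertheless, every tree equimorphic with the ray is
isomorphic to the ray. -/
theorem ray_siblings :
    (∀ n : ℕ, Equimorphic ray (rayPlusPath n)) ∧
    (∀ m n : ℕ, m ≠ n → ¬ Nonempty (rayPlusPath m ≃g rayPlusPath n)) ∧
    (∀ (β : Type) (T : SimpleGraph β), T.IsTree → Equimorphic ray T →
      Nonempty (T ≃g ray)) := by
  exact ⟨fun n => ⟨⟨Embedding.sumInl⟩, ⟨embBack n⟩⟩, part2_s17, part3⟩
end
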